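/- arXiv:2301.01345 — 5 statements merged into one kernel-verified Lean document; each statement's English description precedes it below -/
import Mathlib

section
/- Let μ and ν be Borel probability measures on ℝ^d (d ≥ 1), each with finite support. If their half-space depths coincide at every point, i.e., D_μ(x) = D_ν(x) for all x ∈ ℝ^d, then μ = ν. -/
open MeasureTheory ProbabilityTheory Filter Topology
open scoped ENNReal RealInnerProductSpace

/-- Tukey's half-space depth of `x` with respect to `μ`:
`D_μ(x) = inf_{u ∈ S^{d-1}} μ{ y : ⟨u, y⟩ ≤ ⟨u, x⟩ }`. -/
noncomputable def halfSpaceDepth {d : ℕ} (μ : Measure (EuclideanSpace ℝ (Fin d)))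
    (x : EuclideanSpace ℝ (Fin d)) : ℝ :=
  ⨅ u : Metric.sphere (0 : EuclideanSpace ℝ (Fin d)) 1,
    (μ {y | ⟪(u : EuclideanSpace ℝ (Fin d)), y⟫ ≤ ⟪(u : EuclideanSpace ℝ (Fin d)), x⟫}).toReal

/-!
For finitely supported measures the infimum defining the depth is a minimum over finitely many
values, and a small perturbation of a minimizing normal makes it injective on the support without
enlarging the half-space there. Suppose μ ≠ ν, take an atom `y` of minimal depth among the points
where μ and ν differ, and say `μ {y} > ν {y}`. Let `H` be a minimal half-space at `y` with generic
normal `u`, and `y₂` the lowest point of `H`, in direction `u`, at which μ and ν differ. The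
half-space at `y₂` parallel to `H` lies in `H`, so by the choice of `y` it is also minimal for μ at
`y₂`; comparing with ν there gives `μ {y₂} < ν {y₂}`, so `y₂ ≠ y`. But then `y` lies in `H` outside
a smaller half-space of the same μ-mass, forcing `μ {y} = 0`.
-/

section Perturbation

variable {E : Type*} [NormedAddCommGroup E] [InnerProductSpace ℝ E]

theorem dense_setOf_inner_ne_zero {v : E} (hv : v ≠ 0) : Dense {w : E | ⟪w, v⟫ ≠ 0} := by
  have hcompl : {w : E | ⟪w, v⟫ ≠ 0} = ((ℝ ∙ v)ᗮ : Set E)ᶜ := by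
    ext w
    simp [Submodule.mem_orthogonal_singleton_iff_inner_left]
  rw [hcompl, ← interior_eq_empty_iff_dense_compl, ← Set.not_nonempty_iff_eq_empty]
  intro h
  have hv' : v ∈ (ℝ ∙ v)ᗮ := ((ℝ ∙ v)ᗮ.eq_top_of_nonempty_interior' h).symm ▸ Submodule.mem_top
  exact hv (inner_self_eq_zero.1 (Submodule.mem_orthogonal_singleton_iff_inner_left.1 hv'))

theorem dense_setOf_injOn_inner {S : Set E} (hS : S.Finite) :
    Dense {w : E | S.InjOn (⟪w, ·⟫)} := by
  have hP : ((S ×ˢ S \ Set.diagonal E).image fun p => {w : E | ⟪w, p.1 - p.2⟫ ≠ 0}).Finite :=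
    (hS.prod hS).sdiff.image _
  refine Dense.mono ?_ (hP.dense_sInter ?_ ?_)
  · intro w hw a ha b hb hab
    by_contra hne
    have := hw _ ⟨(a, b), ⟨⟨ha, hb⟩, hne⟩, rfl⟩
    simp [inner_sub_right, hab] at this
  · rintro _ ⟨p, -, rfl⟩
    exact isOpen_ne_fun (by fun_prop) continuous_const
  · rintro _ ⟨p, ⟨-, hp⟩, rfl⟩
    exact dense_setOf_inner_ne_zero (sub_ne_zero.2 hp)

theorem exists_injOn_inner_halfSpace_subset {S : Set E} (hS : S.Finite) {u : E} (hu : u ≠ 0)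
    (x : E) : ∃ w : E, w ≠ 0 ∧ S.InjOn (⟪w, ·⟫) ∧
      ∀ z ∈ S, ⟪w, z⟫ ≤ ⟪w, x⟫ → ⟪u, z⟫ ≤ ⟪u, x⟫ := by
  have hstrict : ∀ᶠ w in 𝓝 u, ∀ z ∈ S, ⟪u, x⟫ < ⟪u, z⟫ → ⟪w, x⟫ < ⟪w, z⟫ := by
    refine hS.eventually_all.2 fun z _ => eventually_imp_distrib_left.2 fun hz => ?_
    exact ContinuousAt.eventually_lt (by fun_prop) (by fun_prop) hz
  obtain ⟨w, ⟨hw, hwx⟩, hinj⟩ := ((eventually_ne_nhds hu).and hstrict).and_frequently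
    (mem_closure_iff_frequently.1 (dense_setOf_injOn_inner hS u)) |>.exists
  exact ⟨w, hw, hinj, fun z hz hzx => not_lt.1 fun h => (hwx z hz h).not_ge hzx⟩

end Perturbation

section FiniteSupport

variable {α : Type*} [MeasurableSpace α] {μ ν : Measure α}

theorem mem_of_measure_singleton_ne {S : Set α} (hμ : μ Sᶜ = 0) (hν : ν Sᶜ = 0) {z : α}
    (h : μ {z} ≠ ν {z}) : z ∈ S := by
  by_contra hz
  have hzS : {z} ⊆ Sᶜ := Set.singleton_subset_iff.2 hz
  exact h (by rw [measure_mono_null hzS hμ, measure_mono_null hzS hν])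

variable [MeasurableSingletonClass α]

theorem measure_eq_of_forall_singleton {S : Finset α} (hμ : μ (↑S)ᶜ = 0) (hν : ν (↑S)ᶜ = 0)
    {A : Set α} (h : ∀ z ∈ A, μ {z} = ν {z}) : μ A = ν A := by
  classical
  have hA : A ∩ ↑S = ↑(S.filter (· ∈ A)) := by ext; simp [and_comm]
  rw [← measure_inter_conull hμ, ← measure_inter_conull hν, hA, ← sum_measure_singleton,
    ← sum_measure_singleton]
  exact Finset.sum_congr rfl fun z hz => h z (Finset.mem_filter.1 hz).2

theorem measure_singleton_le_of_measure_le [IsFiniteMeasure μ] {S : Finset α}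
    (hμ : μ (↑S)ᶜ = 0) (hν : ν (↑S)ᶜ = 0) {A : Set α} {a : α} (ha : a ∈ A) (hA : μ A ≤ ν A)
    (h : ∀ z ∈ A, z ≠ a → μ {z} = ν {z}) : μ {a} ≤ ν {a} := by
  have hrest : μ (A \ {a}) = ν (A \ {a}) :=
    measure_eq_of_forall_singleton hμ hν fun z hz => h z hz.1 hz.2
  rw [← measure_sdiff_add_inter A (measurableSet_singleton a),
    ← measure_sdiff_add_inter (μ := ν) A (measurableSet_singleton a),
    Set.inter_singleton_of_mem ha, hrest] at hA
  exact (ENNReal.add_le_add_iff_left (hrest ▸ measure_ne_top μ _)).1 hA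

end FiniteSupport

section Depth

variable {d : ℕ} {μ ν : Measure (EuclideanSpace ℝ (Fin d))}

theorem halfSpaceDepth_le {w : EuclideanSpace ℝ (Fin d)} (hw : w ≠ 0)
    (x : EuclideanSpace ℝ (Fin d)) :
    halfSpaceDepth μ x ≤ (μ {y | ⟪w, y⟫ ≤ ⟪w, x⟫}).toReal := by
  have hunit : ‖w‖⁻¹ • w ∈ Metric.sphere (0 : EuclideanSpace ℝ (Fin d)) 1 := by
    rw [mem_sphere_zero_iff_norm, norm_smul, norm_inv, norm_norm,
      inv_mul_cancel₀ (norm_ne_zero_iff.2 hw)]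
  have hset : {y | ⟪‖w‖⁻¹ • w, y⟫ ≤ ⟪‖w‖⁻¹ • w, x⟫} = {y | ⟪w, y⟫ ≤ ⟪w, x⟫} := by
    ext y
    simp [real_inner_smul_left, mul_le_mul_iff_of_pos_left (inv_pos.2 (norm_pos_iff.2 hw))]
  refine (ciInf_le ⟨0, ?_⟩ ⟨_, hunit⟩).trans_eq (by rw [hset])
  rintro _ ⟨v, rfl⟩
  exact ENNReal.toReal_nonneg

theorem exists_injOn_inner_halfSpaceDepth_eq (hd : 1 ≤ d) [IsFiniteMeasure μ]
    {S : Finset (EuclideanSpace ℝ (Fin d))} (hS : μ (↑S)ᶜ = 0) (x : EuclideanSpace ℝ (Fin d)) :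
    ∃ u, u ≠ 0 ∧ (↑S : Set (EuclideanSpace ℝ (Fin d))).InjOn (⟪u, ·⟫) ∧
      (μ {y | ⟪u, y⟫ ≤ ⟪u, x⟫}).toReal = halfSpaceDepth μ x := by
  set f := fun u : Metric.sphere (0 : EuclideanSpace ℝ (Fin d)) 1 =>
    (μ {y | ⟪(u : EuclideanSpace ℝ (Fin d)), y⟫ ≤ ⟪(u : EuclideanSpace ℝ (Fin d)), x⟫}).toReal
  have hfin : (Set.range f).Finite := by
    refine (S.finite_toSet.powerset.image fun B => (μ B).toReal).subset ?_
    rintro _ ⟨u, rfl⟩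
    exact ⟨_, Set.inter_subset_right, congrArg ENNReal.toReal (measure_inter_conull hS)⟩
  have : Nonempty (Metric.sphere (0 : EuclideanSpace ℝ (Fin d)) 1) :=
    ⟨⟨EuclideanSpace.single ⟨0, hd⟩ 1, by simp⟩⟩
  obtain ⟨u₀, hu₀⟩ := (Set.range_nonempty f).csInf_mem hfin
  obtain ⟨u, hu, hinj, hsub⟩ :=
    exists_injOn_inner_halfSpace_subset S.finite_toSet (ne_zero_of_mem_unit_sphere u₀) x
  refine ⟨u, hu, hinj, le_antisymm ?_ (halfSpaceDepth_le hu x)⟩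
  calc (μ {y | ⟪u, y⟫ ≤ ⟪u, x⟫}).toReal = (μ ({y | ⟪u, y⟫ ≤ ⟪u, x⟫} ∩ ↑S)).toReal := by
        rw [measure_inter_conull hS]
    _ ≤ f u₀ := ENNReal.toReal_mono (measure_ne_top _ _)
        (measure_mono fun z hz => hsub z hz.2 hz.1)
    _ = halfSpaceDepth μ x := hu₀

theorem measure_singleton_le_of_isMinOn (hd : 1 ≤ d) [IsFiniteMeasure μ] [IsFiniteMeasure ν]
    {S : Finset (EuclideanSpace ℝ (Fin d))} (hμ : μ (↑S)ᶜ = 0) (hν : ν (↑S)ᶜ = 0)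
    (hle : halfSpaceDepth μ ≤ halfSpaceDepth ν) {y : EuclideanSpace ℝ (Fin d)}
    (hy : IsMinOn (halfSpaceDepth μ) {z | μ {z} ≠ ν {z}} y) : μ {y} ≤ ν {y} := by
  by_contra! hlt
  obtain ⟨u, hu, hinj, hdepth⟩ := exists_injOn_inner_halfSpaceDepth_eq hd hμ y
  set H := fun x => {z | ⟪u, z⟫ ≤ ⟪u, x⟫}
  have hS : ∀ z, μ {z} ≠ ν {z} → z ∈ (↑S : Set _) := fun z => mem_of_measure_singleton_ne hμ hν
  obtain ⟨y₂, ⟨hy₂, hy₂y⟩, hy₂min⟩ :=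
    Set.exists_min_image {z | μ {z} ≠ ν {z} ∧ z ∈ H y} (⟪u, ·⟫)
      (S.finite_toSet.subset fun z hz => hS z hz.1) ⟨y, hlt.ne', le_refl ⟪u, y⟫⟩
  have hsub : H y₂ ⊆ H y := fun z (hz : ⟪u, z⟫ ≤ ⟪u, y₂⟫) => hz.trans hy₂y
  have hDy₂ : halfSpaceDepth μ y ≤ halfSpaceDepth μ y₂ := isMinOn_iff.1 hy y₂ hy₂
  have hHμ : μ (H y₂) = μ (H y) := by
    refine le_antisymm (measure_mono hsub) ?_
    refine (ENNReal.toReal_le_toReal (measure_ne_top _ _) (measure_ne_top _ _)).1 ?_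
    exact hdepth.trans_le (hDy₂.trans (halfSpaceDepth_le hu y₂))
  have hHμν : μ (H y₂) ≤ ν (H y₂) := by
    refine (ENNReal.toReal_le_toReal (measure_ne_top _ _) (measure_ne_top _ _)).1 ?_
    calc (μ (H y₂)).toReal = halfSpaceDepth μ y := by rw [hHμ, hdepth]
      _ ≤ halfSpaceDepth ν y₂ := hDy₂.trans (hle y₂)
      _ ≤ (ν (H y₂)).toReal := halfSpaceDepth_le hu y₂
  have hy₂le : μ {y₂} ≤ ν {y₂} := by
    refine measure_singleton_le_of_measure_le hμ hν (le_refl ⟪u, y₂⟫) hHμν fun z hz hzy₂ => ?_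
    by_contra hne
    exact hzy₂ (hinj (hS z hne) (hS y₂ hy₂) (le_antisymm hz (hy₂min z ⟨hne, hsub hz⟩)))
  have hy₂_ne : y₂ ≠ y := fun h => (h ▸ hy₂le).not_gt hlt
  have hyH : y ∉ H y₂ := fun h => hy₂_ne (hinj (hS y₂ hy₂) (hS y hlt.ne') (le_antisymm hy₂y h))
  have hμy : μ {y} ≤ 0 :=
    calc μ {y} ≤ μ (H y \ H y₂) :=
          measure_mono (Set.singleton_subset_iff.2 ⟨le_refl ⟪u, y⟫, hyH⟩)
      _ = 0 := by
        rw [measure_sdiff hsub (measurableSet_le (by fun_prop) (by fun_prop)).nullMeasurableSet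
          (measure_ne_top _ _), hHμ, tsub_self]
  exact (hlt.trans_le hμy).not_ge zero_le

end Depth

/-- If two Borel probability measures on `ℝ^d` (`d ≥ 1`), each with finite support,
have the same half-space depth at every point, then they are equal. -/
theorem stmt_0 {d : ℕ} (hd : 1 ≤ d)
    (μ ν : Measure (EuclideanSpace ℝ (Fin d)))
    [IsProbabilityMeasure μ] [IsProbabilityMeasure ν]
    (hμfin : ∃ S : Finset (EuclideanSpace ℝ (Fin d)), μ (↑S : Set (EuclideanSpace ℝ (Fin d)))ᶜ = 0)
    (hνfin : ∃ S : Finset (EuclideanSpace ℝ (Fin d)), ν (↑S : Set (EuclideanSpace ℝ (Fin d)))ᶜ = 0)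
    (hdepth : ∀ x, halfSpaceDepth μ x = halfSpaceDepth ν x) :
    μ = ν := by
  classical
  obtain ⟨Sμ, hSμ⟩ := hμfin
  obtain ⟨Sν, hSν⟩ := hνfin
  have hμ : μ (↑(Sμ ∪ Sν))ᶜ = 0 := measure_mono_null (by simp) hSμ
  have hν : ν (↑(Sμ ∪ Sν))ᶜ = 0 := measure_mono_null (by simp) hSν
  suffices ∀ z, μ {z} = ν {z} from
    Measure.ext fun s _ => measure_eq_of_forall_singleton hμ hν fun z _ => this z
  by_contra! ⟨z, hz⟩
  obtain ⟨y, hy, hymin⟩ := Set.exists_min_image {z | μ {z} ≠ ν {z}} (halfSpaceDepth μ)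
    ((Sμ ∪ Sν).finite_toSet.subset fun z => mem_of_measure_singleton_ne hμ hν) ⟨z, hz⟩
  have hμν := measure_singleton_le_of_isMinOn hd hμ hν (fun x => (hdepth x).le)
    (isMinOn_iff.2 hymin)
  have hνμ := measure_singleton_le_of_isMinOn hd hν hμ (fun x => (hdepth x).ge)
    (isMinOn_iff.2 fun z hz => by simpa only [← hdepth] using hymin z (Ne.symm hz))
  exact hy (le_antisymm hμν hνμ)
end

section
/- Let F and F_0 be Borel probability measures on ℝ^d and let X_1, X_2, … be independent and identically distributed random vectors with law F, with empirical measures μ_n. Then for every ε > 0, the probability of the event that |(D_{μ_n}(X_i) − D_{F_0}(X_i)) − (D_F(X_i) − D_{F_0}(X_i))| < ε for every i = 1, …, n (equivalently, that the empirical data-depth-discrepancy plot {(X_i, D_{μ_n}(X_i) − D_{F_0}(X_i))} is contained in the ε-tube around the population discrepancy x ↦ D_F(x) − D_{F_0}(x)) tends to 1 as n → ∞. -/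
open MeasureTheory ProbabilityTheory Filter Topology
open scoped ENNReal RealInnerProductSpace

/-- The empirical measure `n⁻¹ ∑_{i=1}^n δ_{pts i}` of `n` points in `ℝ^d`. -/
noncomputable def empiricalMeasure {d : ℕ} (n : ℕ)
    (pts : Fin n → EuclideanSpace ℝ (Fin d)) : Measure (EuclideanSpace ℝ (Fin d)) :=
  (n : ℝ≥0∞)⁻¹ • ∑ i : Fin n, Measure.dirac (pts i)

section MeasureLemmas

variable {α : Type*} [MeasurableSpace α]

lemma exists_measure_compl_closedBall_le {X : Type*} [PseudoMetricSpace X] [MeasurableSpace X]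
    [OpensMeasurableSpace X] (F : Measure X) [IsFiniteMeasure F] (x : X) {b : ℝ≥0∞}
    (hb : b ≠ 0) : ∃ R : ℝ, F (Metric.closedBall x R)ᶜ ≤ b := by
  have hanti : Antitone fun n : ℕ => (Metric.closedBall x n)ᶜ := fun m n hmn =>
    Set.compl_subset_compl.2 (Metric.closedBall_subset_closedBall (by exact_mod_cast hmn))
  have hlim := tendsto_measure_iInter_atTop (μ := F)
    (fun n => Metric.isClosed_closedBall.measurableSet.compl.nullMeasurableSet) hanti
    ⟨0, measure_ne_top _ _⟩
  rw [← Set.compl_iUnion, Metric.iUnion_closedBall_nat, Set.compl_univ, measure_empty] at hlim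
  obtain ⟨n, hn⟩ := (hlim.eventually (ge_mem_nhds (pos_iff_ne_zero.2 hb))).exists
  exact ⟨n, hn⟩

lemma exists_pos_measure_preimage_closedBall_lt {g : α → ℝ} (hg : Measurable g)
    (F : Measure α) [IsFiniteMeasure F] {t : ℝ} {a : ℝ≥0∞} (h : F (g ⁻¹' {t}) < a) :
    ∃ η > 0, F (g ⁻¹' Metric.closedBall t η) < a := by
  have hlim := tendsto_measure_cthickening_of_isClosed (μ := F.map g)
    ⟨1, one_pos, measure_ne_top _ _⟩ (isClosed_singleton (x := t))
  rw [Measure.map_apply hg (measurableSet_singleton t)] at hlim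
  obtain ⟨η, hη, hηpos⟩ :=
    (((hlim.mono_left nhdsWithin_le_nhds).eventually (gt_mem_nhds h)).and
      (self_mem_nhdsWithin (s := Set.Ioi 0))).exists
  refine ⟨η, hηpos, ?_⟩
  rwa [Metric.cthickening_singleton _ hηpos.le,
    Measure.map_apply hg Metric.isClosed_closedBall.measurableSet] at hη

lemma exists_finset_forall_measure_diff_sUnion_lt (F : Measure α) [IsFiniteMeasure F]
    {𝒞 : Set (Set α)} (h𝒞 : ∀ A ∈ 𝒞, MeasurableSet A) {δ : ℝ≥0∞} (hδ : δ ≠ 0) :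
    ∃ S : Finset (Set α), ↑S ⊆ 𝒞 ∧ ∀ A ∈ 𝒞, F (A \ ⋃₀ ↑S) < δ := by
  classical
  -- `S` nearly maximises the mass of a finite union from `𝒞`, so no `A ∈ 𝒞` can add `δ` to it.
  let m := ⨆ S : {S : Finset (Set α) // ↑S ⊆ 𝒞}, F (⋃₀ ↑S.1)
  have hm : m ≠ ⊤ := ne_top_of_le_ne_top (measure_ne_top F Set.univ)
    (iSup_le fun _ => measure_mono (Set.subset_univ _))
  obtain ⟨⟨S, hS𝒞⟩, hSm⟩ : ∃ S : {S : Finset (Set α) // ↑S ⊆ 𝒞}, m < F (⋃₀ ↑S.1) + δ := by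
    have : Nonempty {S : Finset (Set α) // ↑S ⊆ 𝒞} := ⟨⟨∅, by simp⟩⟩
    rw [← lt_iSup_iff, ← ENNReal.iSup_add]
    exact ENNReal.lt_add_right hm hδ
  refine ⟨S, hS𝒞, fun A hA => lt_of_add_lt_add_left ((?_ : _ ≤ m).trans_lt hSm)⟩
  have hS : MeasurableSet (⋃₀ (S : Set (Set α))) :=
    S.finite_toSet.measurableSet_sUnion fun B hB => h𝒞 B (hS𝒞 hB)
  rw [← measure_union Set.disjoint_sdiff_right ((h𝒞 A hA).diff hS), Set.union_sdiff_self,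
    Set.union_comm, ← Set.sUnion_insert, ← Finset.coe_insert]
  exact le_iSup (fun S : {S : Finset (Set α) // ↑S ⊆ 𝒞} => F (⋃₀ ↑S.1))
    ⟨insert A S, by simpa [Set.insert_subset_iff] using ⟨hA, hS𝒞⟩⟩

lemma le_finset_sum_restrict_add_restrict_compl (F : Measure α) (S : Finset (Set α)) :
    F ≤ ∑ L ∈ S, F.restrict L + F.restrict (⋃₀ ↑S)ᶜ := by
  refine Measure.le_iff.2 fun s hs => ?_
  rw [Measure.add_apply, Measure.finsetSum_apply, Measure.restrict_apply hs, ← Set.sdiff_eq]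
  calc F s ≤ F (s ∩ ⋃₀ ↑S) + F (s \ ⋃₀ ↑S) := measure_le_inter_add_sdiff F s _
    _ ≤ ∑ L ∈ S, F (s ∩ L) + F (s \ ⋃₀ ↑S) := by
        gcongr
        rw [Set.sUnion_eq_biUnion, Set.inter_iUnion₂]
        exact measure_biUnion_finset_le S _
    _ = ∑ L ∈ S, F.restrict L s + F (s \ ⋃₀ ↑S) := by
        simp only [Measure.restrict_apply hs]

end MeasureLemmas

section Brackets

variable {α β : Type*} [MeasurableSpace α] [MeasurableSpace β]

def HasFiniteBrackets (F : Measure α) (𝒞 : Set (Set α)) (ε : ℝ≥0∞) : Prop :=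
  ∃ B : Set (Set α × Set α), B.Finite ∧
    (∀ p ∈ B, MeasurableSet p.1 ∧ MeasurableSet p.2 ∧ F (p.2 \ p.1) ≤ ε) ∧
    ∀ A ∈ 𝒞, ∃ p ∈ B, A ∈ Set.Icc p.1 p.2

variable {F F' : Measure α} {𝒞 𝒞' : Set (Set α)} {ε ε' : ℝ≥0∞}

lemma hasFiniteBrackets_Icc {G U : Set α} (hG : MeasurableSet G) (hU : MeasurableSet U)
    (hGU : F (U \ G) ≤ ε) : HasFiniteBrackets F (Set.Icc G U) ε :=
  ⟨{(G, U)}, Set.finite_singleton _, by simpa using ⟨hG, hU, hGU⟩,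
    fun _ hA => ⟨_, rfl, hA⟩⟩

lemma HasFiniteBrackets.mono (h : HasFiniteBrackets F 𝒞 ε) (hF : F' ≤ F) (h𝒞 : 𝒞' ⊆ 𝒞)
    (hε : ε ≤ ε') : HasFiniteBrackets F' 𝒞' ε' := by
  obtain ⟨B, hB, hBm, hcov⟩ := h
  exact ⟨B, hB, fun p hp => ⟨(hBm p hp).1, (hBm p hp).2.1,
    (hF _).trans ((hBm p hp).2.2.trans hε)⟩, fun A hA => hcov A (h𝒞 hA)⟩

lemma HasFiniteBrackets.union (h : HasFiniteBrackets F 𝒞 ε) (h' : HasFiniteBrackets F 𝒞' ε) :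
    HasFiniteBrackets F (𝒞 ∪ 𝒞') ε := by
  obtain ⟨B, hB, hBm, hcov⟩ := h
  obtain ⟨B', hB', hBm', hcov'⟩ := h'
  refine ⟨B ∪ B', hB.union hB', fun p hp => hp.elim (hBm p) (hBm' p), ?_⟩
  rintro A (hA | hA)
  · obtain ⟨p, hp, hAp⟩ := hcov A hA
    exact ⟨p, Or.inl hp, hAp⟩
  · obtain ⟨p, hp, hAp⟩ := hcov' A hA
    exact ⟨p, Or.inr hp, hAp⟩

lemma HasFiniteBrackets.add (h : HasFiniteBrackets F 𝒞 ε) (h' : HasFiniteBrackets F' 𝒞 ε') :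
    HasFiniteBrackets (F + F') 𝒞 (ε + ε') := by
  obtain ⟨B, hB, hBm, hcov⟩ := h
  obtain ⟨B', hB', hBm', hcov'⟩ := h'
  refine ⟨Set.image2 (fun p q => (p.1 ∪ q.1, p.2 ∩ q.2)) B B', hB.image2 _ hB', ?_, ?_⟩
  · rintro _ ⟨p, hp, q, hq, rfl⟩
    obtain ⟨hp₁, hp₂, hpε⟩ := hBm p hp
    obtain ⟨hq₁, hq₂, hqε⟩ := hBm' q hq
    refine ⟨hp₁.union hq₁, hp₂.inter hq₂, ?_⟩
    rw [Measure.add_apply]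
    refine add_le_add ((measure_mono fun y hy => ?_).trans hpε)
      ((measure_mono fun y hy => ?_).trans hqε)
    · exact ⟨hy.1.1, fun h => hy.2 (Or.inl h)⟩
    · exact ⟨hy.1.2, fun h => hy.2 (Or.inr h)⟩
  · intro A hA
    obtain ⟨p, hp, hAp₁, hAp₂⟩ := hcov A hA
    obtain ⟨q, hq, hAq₁, hAq₂⟩ := hcov' A hA
    exact ⟨_, Set.mem_image2_of_mem hp hq, Set.union_subset hAp₁ hAq₁,
      Set.subset_inter hAp₂ hAq₂⟩

lemma HasFiniteBrackets.finset_sum {ι : Type*} {s : Finset ι} {F : ι → Measure α}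
    (h : ∀ i ∈ s, HasFiniteBrackets (F i) 𝒞 ε) :
    HasFiniteBrackets (∑ i ∈ s, F i) 𝒞 (s.card * ε) := by
  classical
  induction s using Finset.induction_on with
  | empty =>
    exact (hasFiniteBrackets_Icc (ε := 0) .empty .univ (by simp)).mono le_rfl
      (fun A _ => ⟨Set.empty_subset A, Set.subset_univ A⟩) (by simp)
  | insert i s hi ih =>
    rw [Finset.sum_insert hi, Finset.card_insert_of_notMem hi, Nat.cast_succ, add_mul, one_mul,
      add_comm _ ε]
    exact (h i (s.mem_insert_self i)).add (ih fun j hj => h j (Finset.mem_insert_of_mem hj))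

lemma HasFiniteBrackets.of_map {𝒞' : Set (Set β)} {φ : α → β} (hφ : Measurable φ)
    {L : Set α} (hL : MeasurableSet L) (hFL : F Lᶜ = 0)
    (htrace : ∀ A ∈ 𝒞, ∃ A' ∈ 𝒞', A ∩ L = φ ⁻¹' A' ∩ L)
    (h : HasFiniteBrackets (F.map φ) 𝒞' ε) : HasFiniteBrackets F 𝒞 ε := by
  obtain ⟨B, hB, hBm, hcov⟩ := h
  refine ⟨(fun p => (φ ⁻¹' p.1 ∩ L, φ ⁻¹' p.2 ∪ Lᶜ)) '' B, hB.image _, ?_, ?_⟩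
  · rintro _ ⟨p, hp, rfl⟩
    obtain ⟨hp₁, hp₂, hpε⟩ := hBm p hp
    refine ⟨(hφ hp₁).inter hL, (hφ hp₂).union hL.compl, ?_⟩
    calc F ((φ ⁻¹' p.2 ∪ Lᶜ) \ (φ ⁻¹' p.1 ∩ L)) ≤ F (φ ⁻¹' (p.2 \ p.1) ∪ Lᶜ) := by
          gcongr
          rintro y ⟨hy₂ | hyL, hy₁⟩
          · by_cases hyL : y ∈ L
            · exact Or.inl ⟨hy₂, fun h => hy₁ ⟨h, hyL⟩⟩
            · exact Or.inr hyL
          · exact Or.inr hyL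
      _ ≤ F.map φ (p.2 \ p.1) + F Lᶜ := by
          rw [Measure.map_apply hφ (hp₂.diff hp₁)]
          exact measure_union_le _ _
      _ ≤ ε := by rw [hFL, add_zero]; exact hpε
  · intro A hA
    obtain ⟨A', hA', hAL⟩ := htrace A hA
    obtain ⟨p, hp, hAp₁, hAp₂⟩ := hcov A' hA'
    refine ⟨_, ⟨p, hp, rfl⟩, ?_, ?_⟩
    · rintro y ⟨hy₁, hyL⟩
      exact (hAL ▸ ⟨hAp₁ hy₁, hyL⟩ : y ∈ A ∩ L).1
    · intro y hy
      by_cases hyL : y ∈ L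
      · exact Or.inl (hAp₂ (hAL ▸ ⟨hy, hyL⟩ : y ∈ φ ⁻¹' A' ∩ L).1)
      · exact Or.inr hyL

lemma hasFiniteBrackets_image_of_isCompact {ι : Type*} [TopologicalSpace ι] {K : Set ι}
    (hK : IsCompact K) (A : ι → Set α)
    (hloc : ∀ k ∈ K, ∃ G U, MeasurableSet G ∧ MeasurableSet U ∧ F (U \ G) ≤ ε ∧
      ∀ᶠ k' in 𝓝 k, A k' ∈ Set.Icc G U) :
    HasFiniteBrackets F (A '' K) ε := by
  choose! G U hG hU hGU hA using hloc
  obtain ⟨t, htK, hKt⟩ := hK.elim_nhds_subcover (fun k => {k' | A k' ∈ Set.Icc (G k) (U k)}) hA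
  refine ⟨(fun k => (G k, U k)) '' t, t.finite_toSet.image _, ?_, ?_⟩
  · rintro _ ⟨k, hk, rfl⟩
    exact ⟨hG k (htK k hk), hU k (htK k hk), hGU k (htK k hk)⟩
  · rintro _ ⟨k', hk', rfl⟩
    obtain ⟨k, hk, hk'k⟩ := Set.mem_iUnion₂.mp (hKt hk')
    exact ⟨_, ⟨k, hk, rfl⟩, hk'k⟩

end Brackets

section HalfSpaces

variable {V : Type*} [NormedAddCommGroup V] [NormedSpace ℝ V]

variable (V) in
def halfSpaces : Set (Set V) := {A | ∃ (f : StrongDual ℝ V) (t : ℝ), A = {y | f y ≤ t}}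

variable (V) in
def affineHyperplanes : Set (Set V) :=
  {A | ∃ f : StrongDual ℝ V, f ≠ 0 ∧ ∃ t : ℝ, A = {y | f y = t}}

lemma setOf_le_eq_unit_or_subset_compl_or_superset (f : StrongDual ℝ V) (t R : ℝ) :
    (∃ g : StrongDual ℝ V, ‖g‖ = 1 ∧ ∃ s ∈ Set.Icc (-R) R, {y | f y ≤ t} = {y | g y ≤ s}) ∨
      {y | f y ≤ t} ⊆ (Metric.closedBall 0 R)ᶜ ∨ Metric.closedBall 0 R ⊆ {y | f y ≤ t} := by
  by_cases hsup : Metric.closedBall 0 R ⊆ {y | f y ≤ t}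
  · exact Or.inr (Or.inr hsup)
  by_cases hdisj : {y | f y ≤ t} ⊆ (Metric.closedBall 0 R)ᶜ
  · exact Or.inr (Or.inl hdisj)
  left
  obtain ⟨y₁, hy₁R, hy₁t⟩ := Set.not_subset.1 hsup
  obtain ⟨y₂, hy₂t, hy₂R⟩ := Set.not_subset.1 hdisj
  rw [Set.mem_ofPred_eq, not_le] at hy₁t
  rw [Set.mem_ofPred_eq] at hy₂t
  rw [Set.notMem_compl_iff] at hy₂R
  rw [mem_closedBall_zero_iff] at hy₁R hy₂R
  have hf : 0 < ‖f‖ := norm_pos_iff.2 fun hf => by simp [hf] at hy₁t hy₂t; linarith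
  have hbound : ∀ y : V, ‖y‖ ≤ R → |f y| ≤ ‖f‖ * R := fun y hy =>
    (f.le_opNorm y).trans (mul_le_mul_of_nonneg_left hy hf.le)
  refine ⟨‖f‖⁻¹ • f, by rw [norm_smul, norm_inv, norm_norm, inv_mul_cancel₀ hf.ne'],
    t / ‖f‖, ⟨?_, ?_⟩, ?_⟩
  · rw [le_div_iff₀ hf, neg_mul, mul_comm]
    linarith [(abs_le.1 (hbound y₂ hy₂R)).1]
  · rw [div_le_iff₀ hf, mul_comm]
    linarith [(abs_le.1 (hbound y₁ hy₁R)).2]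
  · ext y
    simp only [Set.mem_ofPred_eq, FunLike.coe_smul, Pi.smul_apply, smul_eq_mul]
    rw [inv_mul_eq_div, div_le_div_iff_of_pos_right hf]

lemma setOf_le_mem_Icc_of_norm_sub_mul_add_abs_sub_lt {f f' : StrongDual ℝ V} {t t' R η : ℝ}
    (h : ‖f' - f‖ * R + |t' - t| < η) :
    {y | f' y ≤ t'} ∈ Set.Icc ({y | f y ≤ t - η} ∩ Metric.closedBall 0 R)
      ({y | f y ≤ t + η} ∪ (Metric.closedBall 0 R)ᶜ) := by
  have hclose : ∀ y ∈ Metric.closedBall (0 : V) R, |(f' y - t') - (f y - t)| < η := by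
    intro y hy
    rw [mem_closedBall_zero_iff] at hy
    calc |(f' y - t') - (f y - t)| = |(f' - f) y - (t' - t)| := by
          rw [sub_apply]; ring_nf
      _ ≤ ‖f' - f‖ * R + |t' - t| := by
          refine (abs_sub _ _).trans (add_le_add_left ?_ _)
          exact ((f' - f).le_opNorm y).trans (mul_le_mul_of_nonneg_left hy (norm_nonneg _))
      _ < η := h
  refine ⟨fun y ⟨hy, hyR⟩ => ?_, fun y hy => ?_⟩
  · have := (abs_lt.1 (hclose y hyR)).2
    simp only [Set.mem_ofPred_eq] at hy ⊢
    linarith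
  · by_cases hyR : y ∈ Metric.closedBall (0 : V) R
    · have := (abs_lt.1 (hclose y hyR)).1
      simp only [Set.mem_ofPred_eq] at hy
      exact Or.inl (by simp only [Set.mem_ofPred_eq]; linarith)
    · exact Or.inr hyR

variable [MeasurableSpace V] [BorelSpace V]

lemma hasFiniteBrackets_image_sphere_prod_Icc [FiniteDimensional ℝ V] {F : Measure V}
    [IsFiniteMeasure F] {a b : ℝ≥0∞} {R : ℝ} (hR : F (Metric.closedBall 0 R)ᶜ ≤ b)
    (hF : ∀ H ∈ affineHyperplanes V, F H < a) :
    HasFiniteBrackets F ((fun p : StrongDual ℝ V × ℝ => {y | p.1 y ≤ p.2}) ''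
      (Metric.sphere 0 1 ×ˢ Set.Icc (-R) R)) (a + b) := by
  set C := Metric.closedBall (0 : V) R
  have hC : MeasurableSet C := Metric.isClosed_closedBall.measurableSet
  refine hasFiniteBrackets_image_of_isCompact ((isCompact_sphere 0 1).prod isCompact_Icc) _ ?_
  rintro ⟨f, t⟩ ⟨hf, -⟩
  obtain ⟨η, hη, hηa⟩ := exists_pos_measure_preimage_closedBall_lt f.measurable F
    (hF _ ⟨f, ne_zero_of_mem_unit_sphere ⟨f, hf⟩, t, rfl⟩)
  refine ⟨{y | f y ≤ t - η} ∩ C, {y | f y ≤ t + η} ∪ Cᶜ,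
    (measurableSet_le f.measurable measurable_const).inter hC,
    (measurableSet_le f.measurable measurable_const).union hC.compl, ?_, ?_⟩
  · calc F (({y | f y ≤ t + η} ∪ Cᶜ) \ ({y | f y ≤ t - η} ∩ C))
        ≤ F (Cᶜ ∪ f ⁻¹' Metric.closedBall t η) := by
          refine measure_mono fun y ⟨hyU, hyG⟩ => ?_
          by_cases hyC : y ∈ C
          · refine Or.inr ?_
            rw [Set.mem_preimage, Metric.mem_closedBall, Real.dist_eq, abs_sub_le_iff]
            exact ⟨sub_left_le_of_le_add (hyU.resolve_right (not_not.2 hyC)),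
              sub_le_comm.1 (not_le.1 fun h => hyG ⟨h, hyC⟩).le⟩
          · exact Or.inl hyC
      _ ≤ b + a := (measure_union_le _ _).trans (add_le_add hR hηa.le)
      _ = a + b := add_comm _ _
  · have hlim : Tendsto (fun p : StrongDual ℝ V × ℝ => ‖p.1 - f‖ * R + |p.2 - t|)
        (𝓝 (f, t)) (𝓝 0) := by
      refine Continuous.tendsto' ?_ _ _ (by simp)
      fun_prop
    exact (hlim.eventually_lt_const hη).mono fun p hp =>
      setOf_le_mem_Icc_of_norm_sub_mul_add_abs_sub_lt hp

lemma hasFiniteBrackets_halfSpaces_of_forall_measure_lt [FiniteDimensional ℝ V]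
    (F : Measure V) [IsFiniteMeasure F] {a b : ℝ≥0∞} (hb : b ≠ 0)
    (hF : ∀ H ∈ affineHyperplanes V, F H < a) :
    HasFiniteBrackets F (halfSpaces V) (a + b) := by
  obtain ⟨R, hR⟩ := exists_measure_compl_closedBall_le F 0 hb
  have hC : MeasurableSet (Metric.closedBall (0 : V) R) :=
    Metric.isClosed_closedBall.measurableSet
  refine (((hasFiniteBrackets_image_sphere_prod_Icc hR hF).union
    (hasFiniteBrackets_Icc .empty hC.compl ?_)).union
    (hasFiniteBrackets_Icc hC .univ ?_)).mono le_rfl ?_ le_rfl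
  · simpa using hR.trans le_add_self
  · simpa [Set.compl_eq_univ_sdiff] using hR.trans le_add_self
  · rintro _ ⟨f, t, rfl⟩
    rcases setOf_le_eq_unit_or_subset_compl_or_superset f t R with
      ⟨g, hg, s, hs, heq⟩ | hdisj | hsup
    · exact Or.inl (Or.inl ⟨(g, s), ⟨by simpa using hg, hs⟩, heq.symm⟩)
    · exact Or.inl (Or.inr ⟨Set.empty_subset _, hdisj⟩)
    · exact Or.inr ⟨hsup, Set.subset_univ _⟩

lemma hasFiniteBrackets_restrict_affineHyperplane {f₀ : StrongDual ℝ V} (hf₀ : f₀ ≠ 0) (t₀ : ℝ)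
    (F : Measure V) [IsFiniteMeasure F] {ε : ℝ≥0∞}
    (hker : ∀ G : Measure (LinearMap.ker (f₀ : V →ₗ[ℝ] ℝ)), IsFiniteMeasure G →
      HasFiniteBrackets G (halfSpaces (LinearMap.ker (f₀ : V →ₗ[ℝ] ℝ))) ε) :
    HasFiniteBrackets (F.restrict {y | f₀ y = t₀}) (halfSpaces V) ε := by
  obtain ⟨w, hw⟩ := DFunLike.ne_iff.1 hf₀
  set v := (f₀ w)⁻¹ • w
  have hv : f₀ v = 1 := by simp [v, inv_mul_cancel₀ hw]
  let φ := f₀.projKerOfRightInverse (ContinuousLinearMap.toSpanSingleton ℝ v)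
    fun c => by simp [hv]
  have hL : MeasurableSet {y | f₀ y = t₀} := measurableSet_eq_fun f₀.measurable measurable_const
  refine HasFiniteBrackets.of_map φ.measurable hL ?_ ?_ (hker _ inferInstance)
  · rw [Measure.restrict_apply hL.compl, Set.compl_inter_self, measure_empty]
  · -- `φ y = y - f₀ y • v`, so `f y = f (φ y) + t₀ * f v` on the hyperplane
    rintro _ ⟨f, t, rfl⟩
    refine ⟨_, ⟨f.comp (LinearMap.ker (f₀ : V →ₗ[ℝ] ℝ)).subtypeL, t - t₀ * f v, rfl⟩, ?_⟩
    ext y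
    simp only [Set.mem_inter_iff, Set.mem_ofPred_eq, Set.mem_preimage, and_congr_left_iff]
    intro hy
    simp [φ, hy]

theorem hasFiniteBrackets_halfSpaces [FiniteDimensional ℝ V] (F : Measure V) [IsFiniteMeasure F]
    {ε : ℝ≥0∞} (hε : ε ≠ 0) : HasFiniteBrackets F (halfSpaces V) ε := by
  induction hn : Module.finrank ℝ V using Nat.strong_induction_on generalizing V ε with
  | _ n ih =>
    have hH : ∀ H ∈ affineHyperplanes V, MeasurableSet H := by
      rintro _ ⟨f, -, t, rfl⟩
      exact measurableSet_eq_fun f.measurable measurable_const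
    have hδ : ε / 2 / 2 ≠ 0 := by simp [hε]
    obtain ⟨S, hS, hSlt⟩ := exists_finset_forall_measure_diff_sUnion_lt F hH hδ
    have hlight : HasFiniteBrackets (F.restrict (⋃₀ ↑S)ᶜ) (halfSpaces V)
        (ε / 2 / 2 + ε / 2 / 2) :=
      hasFiniteBrackets_halfSpaces_of_forall_measure_lt _ hδ fun H hH' => by
        rw [Measure.restrict_apply (hH H hH'), ← Set.sdiff_eq]
        exact hSlt H hH'
    have hheavy : ∀ L ∈ S, HasFiniteBrackets (F.restrict L) (halfSpaces V) (ε / 2 / S.card) := by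
      intro L hL
      obtain ⟨f₀, hf₀, t₀, rfl⟩ := hS hL
      have hker : Module.finrank ℝ (LinearMap.ker (f₀ : V →ₗ[ℝ] ℝ)) < n :=
        hn ▸ Submodule.finrank_lt (LinearMap.ker_eq_top.not.2 (by exact_mod_cast hf₀))
      exact hasFiniteBrackets_restrict_affineHyperplane hf₀ t₀ F fun G _ =>
        ih _ hker G (by simp [hε]) rfl
    refine ((HasFiniteBrackets.finset_sum hheavy).add hlight).mono
      (le_finset_sum_restrict_add_restrict_compl F S) le_rfl ?_
    calc (S.card : ℝ≥0∞) * (ε / 2 / S.card) + (ε / 2 / 2 + ε / 2 / 2) ≤ ε / 2 + ε / 2 :=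
          add_le_add ENNReal.mul_div_le (ENNReal.add_halves _).le
      _ = ε := ENNReal.add_halves ε

end HalfSpaces

section Empirical

variable {Ω α : Type*}

noncomputable def empiricalFrequency (x : ℕ → α) (n : ℕ) (A : Set α) : ℝ :=
  (∑ i ∈ Finset.range n, A.indicator 1 (x i)) / n

lemma empiricalFrequency_mono (x : ℕ → α) (n : ℕ) {A B : Set α} (hAB : A ⊆ B) :
    empiricalFrequency x n A ≤ empiricalFrequency x n B :=
  div_le_div_of_nonneg_right (Finset.sum_le_sum fun _ _ =>
    Set.indicator_le_indicator_of_subset hAB (fun _ => zero_le_one) _) (Nat.cast_nonneg n)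

variable [MeasurableSpace Ω] [MeasurableSpace α] {P : Measure Ω} {F : Measure α} {X : ℕ → Ω → α}

lemma abs_empiricalFrequency_sub_le_of_mem_Icc [IsFiniteMeasure F] (x : ℕ → α) (n : ℕ)
    {G U A : Set α} (hA : A ∈ Set.Icc G U) {δ : ℝ} (hδ : 0 ≤ δ)
    (hGU : F (U \ G) ≤ ENNReal.ofReal δ)
    (hG : |empiricalFrequency x n G - (F G).toReal| ≤ δ)
    (hU : |empiricalFrequency x n U - (F U).toReal| ≤ δ) :
    |empiricalFrequency x n A - (F A).toReal| ≤ δ + δ := by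
  have hgap : F.real U ≤ F.real (U \ G) + F.real G :=
    (measureReal_mono (Set.subset_sdiff_union U G)).trans (measureReal_union_le _ _)
  have hdiff : F.real (U \ G) ≤ δ := ENNReal.toReal_le_of_le_ofReal hδ hGU
  have hFG : F.real G ≤ F.real A := measureReal_mono hA.1
  have hFU : F.real A ≤ F.real U := measureReal_mono hA.2
  have hxG := empiricalFrequency_mono x n hA.1
  have hxU := empiricalFrequency_mono x n hA.2
  simp only [Measure.real] at hgap hdiff hFG hFU
  rw [abs_le] at hG hU ⊢
  constructor <;> linarith [hG.1, hG.2, hU.1, hU.2]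

lemma ae_tendsto_empiricalFrequency [IsProbabilityMeasure P] (hmeas : ∀ i, Measurable (X i))
    (hindep : iIndepFun X P) (hid : ∀ i, P.map (X i) = F) {A : Set α} (hA : MeasurableSet A) :
    ∀ᵐ ω ∂P, Tendsto (fun n => empiricalFrequency (X · ω) n A) atTop (𝓝 (F A).toReal) := by
  have hind : Measurable (A.indicator (1 : α → ℝ)) := measurable_one.indicator hA
  have hmean : P[fun ω => A.indicator 1 (X 0 ω)] = (F A).toReal := by
    rw [← integral_map (hmeas 0).aemeasurable hind.aestronglyMeasurable, hid,
      integral_indicator_one hA]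
    rfl
  have hint : Integrable (fun ω => A.indicator (1 : α → ℝ) (X 0 ω)) P :=
    Integrable.of_bound (hind.comp (hmeas 0)).aestronglyMeasurable 1
      (Eventually.of_forall fun ω => by
        by_cases h : X 0 ω ∈ A <;> simp [Set.indicator_of_mem, Set.indicator_of_notMem, h])
  have hlaw := strong_law_ae_real (fun i ω => A.indicator (1 : α → ℝ) (X i ω)) hint
    (fun i j hij => (hindep.indepFun hij).comp hind hind)
    (fun i => IdentDistrib.comp ⟨(hmeas i).aemeasurable, (hmeas 0).aemeasurable,
      by rw [hid, hid]⟩ hind)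
  rw [hmean] at hlaw
  exact hlaw

lemma ae_eventually_forall_abs_empiricalFrequency_sub_le [IsProbabilityMeasure P]
    [IsFiniteMeasure F] (hmeas : ∀ i, Measurable (X i)) (hindep : iIndepFun X P)
    (hid : ∀ i, P.map (X i) = F) {𝒞 : Set (Set α)}
    (hbr : ∀ δ ≠ 0, HasFiniteBrackets F 𝒞 δ) {ε : ℝ} (hε : 0 < ε) :
    ∀ᵐ ω ∂P, ∀ᶠ n in atTop, ∀ A ∈ 𝒞,
      |empiricalFrequency (X · ω) n A - (F A).toReal| ≤ ε := by
  obtain ⟨B, hB, hBm, hcov⟩ := hbr (ENNReal.ofReal (ε / 2)) (by simp [hε])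
  have hslln : ∀ᵐ ω ∂P, ∀ p ∈ B,
      Tendsto (fun n => empiricalFrequency (X · ω) n p.1) atTop (𝓝 (F p.1).toReal) ∧
      Tendsto (fun n => empiricalFrequency (X · ω) n p.2) atTop (𝓝 (F p.2).toReal) := by
    rw [ae_ball_iff hB.countable]
    exact fun p hp => (ae_tendsto_empiricalFrequency hmeas hindep hid (hBm p hp).1).and
      (ae_tendsto_empiricalFrequency hmeas hindep hid (hBm p hp).2.1)
  filter_upwards [hslln] with ω hω
  have hclose : ∀ᶠ n in atTop, ∀ p ∈ B,
      |empiricalFrequency (X · ω) n p.1 - (F p.1).toReal| ≤ ε / 2 ∧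
      |empiricalFrequency (X · ω) n p.2 - (F p.2).toReal| ≤ ε / 2 := by
    refine (eventually_all_finite hB).2 fun p hp => ?_
    simp only [← Real.dist_eq]
    exact ((hω p hp).1.eventually (Metric.closedBall_mem_nhds _ (half_pos hε))).and
      ((hω p hp).2.eventually (Metric.closedBall_mem_nhds _ (half_pos hε)))
  filter_upwards [hclose] with n hn A hA
  obtain ⟨p, hp, hAp⟩ := hcov A hA
  exact (abs_empiricalFrequency_sub_le_of_mem_Icc _ n hAp (half_pos hε).le (hBm p hp).2.2
    (hn p hp).1 (hn p hp).2).trans_eq (add_halves ε)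

lemma tendsto_measure_of_ae_eventually_mem [IsProbabilityMeasure P] {S : ℕ → Set Ω}
    (h : ∀ᵐ ω ∂P, ∀ᶠ n in atTop, ω ∈ S n) : Tendsto (fun n => P (S n)) atTop (𝓝 1) := by
  have hmono : Monotone fun n => ⋂ m ≥ n, S m := fun n n' hnn' =>
    Set.biInter_mono (fun m hm => le_trans hnn' hm) fun _ _ => subset_rfl
  have hfull : P (⋃ n, ⋂ m ≥ n, S m) = 1 := by
    rw [← measure_univ (μ := P)]
    refine measure_congr (ae_eq_univ.2 (ae_iff.1 ?_))
    filter_upwards [h] with ω hω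
    obtain ⟨N, hN⟩ := eventually_atTop.1 hω
    exact Set.mem_iUnion.2 ⟨N, Set.mem_iInter₂.2 hN⟩
  refine tendsto_of_tendsto_of_tendsto_of_le_of_le (hfull ▸ tendsto_measure_iUnion_atTop hmono)
    tendsto_const_nhds (fun n => measure_mono (Set.biInter_subset_of_mem le_rfl))
    fun _ => prob_le_one

end Empirical

lemma abs_ciInf_sub_ciInf_le {ι : Sort*} {f g : ι → ℝ} (hf : BddBelow (Set.range f))
    (hg : BddBelow (Set.range g)) {c : ℝ} (hc : 0 ≤ c) (h : ∀ i, |f i - g i| ≤ c) :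
    |(⨅ i, f i) - ⨅ i, g i| ≤ c := by
  cases isEmpty_or_nonempty ι
  · simpa using hc
  have key : ∀ {f g : ι → ℝ}, BddBelow (Set.range f) → (∀ i, f i - g i ≤ c) →
      (⨅ i, f i) - ⨅ i, g i ≤ c :=
    fun hf h => sub_le_comm.1 (le_ciInf fun i => by linarith [ciInf_le hf i, h i])
  exact abs_sub_le_iff.2 ⟨key hf fun i => (abs_sub_le_iff.1 (h i)).1,
    key hg fun i => (abs_sub_le_iff.1 (h i)).2⟩

section Depth

variable {d : ℕ}

lemma abs_halfSpaceDepth_sub_le {μ ν : Measure (EuclideanSpace ℝ (Fin d))} {c : ℝ} (hc : 0 ≤ c)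
    (h : ∀ (u : EuclideanSpace ℝ (Fin d)) (t : ℝ),
      |(μ {y | ⟪u, y⟫ ≤ t}).toReal - (ν {y | ⟪u, y⟫ ≤ t}).toReal| ≤ c)
    (x : EuclideanSpace ℝ (Fin d)) : |halfSpaceDepth μ x - halfSpaceDepth ν x| ≤ c :=
  abs_ciInf_sub_ciInf_le ⟨0, by rintro _ ⟨u, rfl⟩; positivity⟩
    ⟨0, by rintro _ ⟨u, rfl⟩; positivity⟩ hc fun u => h u _

lemma empiricalMeasure_apply_toReal (x : ℕ → EuclideanSpace ℝ (Fin d)) (n : ℕ)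
    (A : Set (EuclideanSpace ℝ (Fin d))) :
    (empiricalMeasure n (fun j => x j) A).toReal = empiricalFrequency x n A := by
  have hdirac (y : EuclideanSpace ℝ (Fin d)) : (Measure.dirac y A).toReal = A.indicator 1 y := by
    by_cases hy : y ∈ A <;> simp [Measure.dirac_apply, hy]
  rw [empiricalMeasure, Measure.smul_apply, Measure.finsetSum_apply, smul_eq_mul,
    ENNReal.toReal_mul, ENNReal.toReal_sum fun _ _ => measure_ne_top _ _, ENNReal.toReal_inv,
    ENNReal.toReal_natCast, empiricalFrequency, div_eq_inv_mul]
  simp only [hdirac, Fin.sum_univ_eq_sum_range (fun i => A.indicator 1 (x i))]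

end Depth

theorem stmt_5_general {d : ℕ} {Ω : Type*} [MeasurableSpace Ω]
    (P : Measure Ω) [IsProbabilityMeasure P]
    (F F₀ : Measure (EuclideanSpace ℝ (Fin d)))
    [IsProbabilityMeasure F]
    (X : ℕ → Ω → EuclideanSpace ℝ (Fin d))
    (hmeas : ∀ i, Measurable (X i))
    (hindep : iIndepFun X P)
    (hid : ∀ i, Measure.map (X i) P = F) :
    ∀ ε > (0 : ℝ), Tendsto (fun n =>
      P {ω | ∀ i : Fin n,
        |(halfSpaceDepth (empiricalMeasure n (fun j => X j ω)) (X i ω) -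
            halfSpaceDepth F₀ (X i ω)) -
          (halfSpaceDepth F (X i ω) - halfSpaceDepth F₀ (X i ω))| < ε})
      atTop (𝓝 1) := by
  intro ε hε
  have hGC := ae_eventually_forall_abs_empiricalFrequency_sub_le hmeas hindep hid
    (fun δ hδ => hasFiniteBrackets_halfSpaces F hδ) (half_pos hε)
  refine tendsto_measure_of_ae_eventually_mem (hGC.mono fun ω hω => hω.mono fun n hn i => ?_)
  rw [sub_sub_sub_cancel_right]
  refine (abs_halfSpaceDepth_sub_le (half_pos hε).le (fun u t => ?_) _).trans_lt
    (half_lt_self hε)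
  rw [empiricalMeasure_apply_toReal (X · ω)]
  exact hn _ ⟨innerSL ℝ u, t, rfl⟩

/-- The empirical data-depth-discrepancy plot is eventually contained, with probability
tending to one, in the `ε`-tube around the population discrepancy `x ↦ D_F(x) − D_{F_0}(x)`. -/
theorem stmt_5 {d : ℕ} {Ω : Type*} [MeasurableSpace Ω]
    (P : Measure Ω) [IsProbabilityMeasure P]
    (F F₀ : Measure (EuclideanSpace ℝ (Fin d)))
    [IsProbabilityMeasure F] [IsProbabilityMeasure F₀]
    (X : ℕ → Ω → EuclideanSpace ℝ (Fin d))
    (hmeas : ∀ i, Measurable (X i))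
    (hindep : iIndepFun X P)
    (hid : ∀ i, Measure.map (X i) P = F) :
    ∀ ε > (0 : ℝ), Tendsto (fun n =>
      P {ω | ∀ i : Fin n,
        |(halfSpaceDepth (empiricalMeasure n (fun j => X j ω)) (X i ω) -
            halfSpaceDepth F₀ (X i ω)) -
          (halfSpaceDepth F (X i ω) - halfSpaceDepth F₀ (X i ω))| < ε})
      atTop (𝓝 1) :=
  stmt_5_general P F F₀ X hmeas hindep hid
end

section
/- Let f_0 and h be continuous, strictly positive probability densities on ℝ^d (with respect to Lebesgue measure) such that ∫ (h(x)/f_0(x) − 1)^4 f_0(x) dx < ∞, let F_0 and H be the corresponding probability measures, and fix γ > 0. For n > γ², define the mixture F_n = (1 − γ/√n) F_0 + (γ/√n) H. Then the sequence of product measures (F_n^{⊗n}) is contiguous with respect to (F_0^{⊗n}): for every sequence of Borel sets A_n ⊆ (ℝ^d)^n with F_0^{⊗n}(A_n) → 0 as n → ∞, one also has F_n^{⊗n}(A_n) → 0. -/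
/-!
Write `Fₙ = F₀.withDensity gₙ` with `gₙ = 1 - ε + ε ℓ`, where `ℓ = h / f₀` and `ε = γ / √n`.
By Cauchy–Schwarz, `Fₙ^⊗n (A) ≤ ‖∏ᵢ gₙ(xᵢ)‖_{L²(F₀^⊗n)} · F₀^⊗n (A)^{1/2}`. Since
`∫ ℓ dF₀ = 1`, the squared norm is `(∫ gₙ² dF₀)ⁿ ≤ (1 + ε² ∫ ℓ² dF₀)ⁿ ≤ exp (γ² ∫ ℓ² dF₀)`,
and the fourth moment assumption makes `∫ ℓ² dF₀` finite, so the factor is bounded in `n`.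
-/

open MeasureTheory ProbabilityTheory Filter Topology
open scoped ENNReal NNReal

namespace MeasureTheory

section Pi

variable {ι : Type*} [Fintype ι] {α : ι → Type*} [∀ i, MeasurableSpace (α i)]
  (μ : ∀ i, Measure (α i)) [∀ i, IsProbabilityMeasure (μ i)]

theorem lintegral_pi_prod {f : ∀ i, α i → ℝ≥0∞} (hf : ∀ i, Measurable (f i)) :
    ∫⁻ x, ∏ i, f i (x i) ∂Measure.pi μ = ∏ i, ∫⁻ a, f i a ∂μ i := by
  rw [lintegral_prod_eq_prod_lintegral_of_indepFun _ _
    (iIndepFun_pi fun i => (hf i).aemeasurable) fun i => (hf i).comp (measurable_pi_apply i)]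
  exact Finset.prod_congr rfl fun i _ => (measurePreserving_eval μ i).lintegral_comp (hf i)

theorem pi_withDensity {g : ∀ i, α i → ℝ≥0∞} (hg : ∀ i, Measurable (g i))
    [∀ i, SigmaFinite ((μ i).withDensity (g i))] :
    Measure.pi (fun i => (μ i).withDensity (g i))
      = (Measure.pi μ).withDensity fun x => ∏ i, g i (x i) := by
  refine Measure.pi_eq (μ := fun i => (μ i).withDensity (g i)) fun s hs => ?_
  have hind : (Set.univ.pi s).indicator (fun x => ∏ i, g i (x i))
      = fun x => ∏ i, (s i).indicator (g i) (x i) := by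
    ext x
    by_cases hx : x ∈ Set.univ.pi s
    · simp [Set.indicator_of_mem hx, Set.indicator_of_mem (hx _ (Set.mem_univ _))]
    · obtain ⟨i, hi⟩ : ∃ i, x i ∉ s i := by simpa [Set.mem_univ_pi] using hx
      rw [Set.indicator_of_notMem hx]
      exact (Finset.prod_eq_zero (Finset.mem_univ i) (Set.indicator_of_notMem hi _)).symm
  rw [withDensity_apply _ (.univ_pi hs), ← lintegral_indicator (.univ_pi hs), hind,
    lintegral_pi_prod μ fun i => (hg i).indicator (hs i)]
  exact Finset.prod_congr rfl fun i _ => by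
    rw [lintegral_indicator (hs i), withDensity_apply _ (hs i)]

end Pi

section Mixture

variable {α : Type*} [MeasurableSpace α]

/-- The mixture `(1 - t) μ + t ν`; `ENNReal.ofReal` truncates the weights at `0`, so this is
only a convex combination for `0 ≤ t ≤ 1`. -/
noncomputable def Measure.mixture (t : ℝ) (μ ν : Measure α) : Measure α :=
  ENNReal.ofReal (1 - t) • μ + ENNReal.ofReal t • ν

theorem withDensity_apply_le_lintegral_sq_rpow_mul_rpow (μ : Measure α) [SFinite μ]
    {L : α → ℝ≥0∞} (hL : Measurable L) (s : Set α) :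
    μ.withDensity L s ≤ (∫⁻ x, L x ^ 2 ∂μ) ^ (1 / 2 : ℝ) * μ s ^ (1 / 2 : ℝ) := by
  calc μ.withDensity L s = ∫⁻ x in s, L x * 1 ∂μ := by simp [withDensity_apply']
    _ ≤ (∫⁻ x in s, L x ^ (2 : ℝ) ∂μ) ^ (1 / 2 : ℝ)
          * (∫⁻ _ in s, 1 ^ (2 : ℝ) ∂μ) ^ (1 / 2 : ℝ) :=
      ENNReal.lintegral_mul_le_Lp_mul_Lq _ .two_two hL.aemeasurable aemeasurable_const
    _ ≤ (∫⁻ x, L x ^ 2 ∂μ) ^ (1 / 2 : ℝ) * μ s ^ (1 / 2 : ℝ) := by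
      simp only [ENNReal.rpow_two, one_pow, setLIntegral_const, one_mul]
      gcongr
      exact Measure.restrict_le_self

theorem withDensity_ofReal_div (μ : Measure α) {f g : α → ℝ} (hf : Measurable f)
    (hg : Measurable g) (hfpos : ∀ x, 0 < f x) :
    (μ.withDensity fun x => ENNReal.ofReal (f x)).withDensity
        (fun x => ENNReal.ofReal (g x / f x)) = μ.withDensity fun x => ENNReal.ofReal (g x) := by
  rw [← withDensity_mul _ hf.ennreal_ofReal (g := fun x => ENNReal.ofReal (g x / f x))
    (hg.div hf).ennreal_ofReal]
  congr 1 with x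
  rw [Pi.mul_apply, ← ENNReal.ofReal_mul (hfpos x).le, mul_div_cancel₀ _ (hfpos x).ne']

theorem lintegral_ofReal_sq_ne_top_of_integrable_pow_four (μ : Measure α) [IsFiniteMeasure μ]
    {r : α → ℝ} (hr : Integrable (fun x => (r x - 1) ^ 4) μ) :
    ∫⁻ x, ENNReal.ofReal (r x) ^ 2 ∂μ ≠ ∞ := by
  refine (lt_of_le_of_lt (lintegral_mono fun x => ?_)
    ((integrable_const 3).add hr).lintegral_lt_top).ne
  calc ENNReal.ofReal (r x) ^ 2 ≤ ENNReal.ofReal |r x| ^ 2 := by gcongr; exact le_abs_self _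
    _ = ENNReal.ofReal (r x ^ 2) := by rw [← ENNReal.ofReal_pow (abs_nonneg _), sq_abs]
    _ ≤ ENNReal.ofReal (3 + (r x - 1) ^ 4) := by
      gcongr
      nlinarith [sq_nonneg (r x - 2), sq_nonneg ((r x - 1) ^ 2 - 1)]

variable (μ : Measure α) [IsProbabilityMeasure μ] {ℓ : α → ℝ≥0∞}

theorem lintegral_const_add_mul_sq_le (hℓ : Measurable ℓ) (hℓ1 : ∫⁻ x, ℓ x ∂μ = 1)
    {a b : ℝ≥0∞} (hab : a + b = 1) :
    ∫⁻ x, (a + b * ℓ x) ^ 2 ∂μ ≤ 1 + b ^ 2 * ∫⁻ x, ℓ x ^ 2 ∂μ := by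
  have hexpand : ∀ x, (a + b * ℓ x) ^ 2 = (a ^ 2 + 2 * a * b * ℓ x) + b ^ 2 * ℓ x ^ 2 :=
    fun x => by ring
  simp_rw [hexpand]
  rw [lintegral_add_right _ ((hℓ.pow_const 2).const_mul _),
    lintegral_add_left measurable_const, lintegral_const, measure_univ, mul_one,
    lintegral_const_mul _ hℓ, hℓ1, mul_one, lintegral_const_mul _ (hℓ.pow_const 2)]
  gcongr
  calc a ^ 2 + 2 * a * b ≤ (a + b) ^ 2 := by rw [add_sq]; exact le_self_add
    _ = 1 := by rw [hab, one_pow]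

theorem pi_mixture_withDensity_apply_le (hℓ : Measurable ℓ) (hℓ1 : ∫⁻ x, ℓ x ∂μ = 1)
    {k : ℝ≥0} (hk : ∫⁻ x, ℓ x ^ 2 ∂μ ≤ k) {ε : ℝ} (hε0 : 0 ≤ ε)
    (hε1 : ε ≤ 1) (n : ℕ) (s : Set (Fin n → α)) :
    Measure.pi (fun _ : Fin n => μ.mixture ε (μ.withDensity ℓ)) s
      ≤ ENNReal.ofReal (Real.exp (n * (ε ^ 2 * k))) ^ (1 / 2 : ℝ)
          * Measure.pi (fun _ : Fin n => μ) s ^ (1 / 2 : ℝ) := by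
  set a := ENNReal.ofReal (1 - ε)
  set b := ENNReal.ofReal ε
  set g : α → ℝ≥0∞ := fun x => a + b * ℓ x
  have hg : Measurable g := measurable_const.add (hℓ.const_mul b)
  have hab : a + b = 1 := by
    rw [← ENNReal.ofReal_add (by linarith) hε0, sub_add_cancel, ENNReal.ofReal_one]
  have hmix : μ.mixture ε (μ.withDensity ℓ) = μ.withDensity g := by
    rw [Measure.mixture, ← withDensity_smul b hℓ, ← withDensity_const,
      ← withDensity_add_left measurable_const]
    rfl
  have : IsFiniteMeasure (μ.withDensity g) := by
    refine isFiniteMeasure_withDensity ?_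
    rw [lintegral_add_left measurable_const, lintegral_const, measure_univ, mul_one,
      lintegral_const_mul _ hℓ, hℓ1, mul_one, hab]
    exact ENNReal.one_ne_top
  have hsq : ∫⁻ x, g x ^ 2 ∂μ ≤ ENNReal.ofReal (1 + ε ^ 2 * k) := by
    calc ∫⁻ x, g x ^ 2 ∂μ ≤ 1 + b ^ 2 * k := by
          grw [lintegral_const_add_mul_sq_le μ hℓ hℓ1 hab, hk]
      _ = ENNReal.ofReal (1 + ε ^ 2 * k) := by
          rw [ENNReal.ofReal_add zero_le_one (by positivity), ENNReal.ofReal_one,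
            ENNReal.ofReal_mul (by positivity), ENNReal.ofReal_pow hε0,
            ENNReal.ofReal_coe_nnreal]
  have hprod : ∫⁻ x : Fin n → α, (∏ i, g (x i)) ^ 2 ∂Measure.pi (fun _ => μ)
      = (∫⁻ x, g x ^ 2 ∂μ) ^ n := by
    simp_rw [← Finset.prod_pow]
    rw [lintegral_pi_prod _ fun _ => hg.pow_const 2, Finset.prod_const, Finset.card_univ,
      Fintype.card_fin]
  have hexp : (1 + ε ^ 2 * k) ^ n ≤ Real.exp (n * (ε ^ 2 * k)) := by
    rw [Real.exp_nat_mul]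
    gcongr
    linarith [Real.add_one_le_exp (ε ^ 2 * k)]
  rw [hmix, pi_withDensity _ fun _ => hg]
  grw [withDensity_apply_le_lintegral_sq_rpow_mul_rpow _ (by fun_prop), hprod, hsq,
    ← ENNReal.ofReal_pow (by positivity), hexp]

theorem tendsto_pi_mixture_withDensity_apply_of_tendsto (hℓ : Measurable ℓ) (hℓ1 : ∫⁻ x, ℓ x ∂μ = 1)
    (hℓ2 : ∫⁻ x, ℓ x ^ 2 ∂μ ≠ ∞) {γ : ℝ} (hγ : 0 ≤ γ) {A : (n : ℕ) → Set (Fin n → α)}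
    (h₀ : Tendsto (fun n : ℕ => Measure.pi (fun _ : Fin n => μ) (A n)) atTop (𝓝 0)) :
    Tendsto (fun n : ℕ =>
      Measure.pi (fun _ : Fin n => μ.mixture (γ / Real.sqrt n) (μ.withDensity ℓ)) (A n))
      atTop (𝓝 0) := by
  set k := (∫⁻ x, ℓ x ^ 2 ∂μ).toNNReal
  have hk : ∫⁻ x, ℓ x ^ 2 ∂μ ≤ k := (ENNReal.coe_toNNReal hℓ2).ge
  set C := ENNReal.ofReal (Real.exp (γ ^ 2 * k)) ^ (1 / 2 : ℝ)
  have hbound : ∀ᶠ n : ℕ in atTop,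
      Measure.pi (fun _ : Fin n => μ.mixture (γ / Real.sqrt n) (μ.withDensity ℓ)) (A n)
        ≤ C * Measure.pi (fun _ : Fin n => μ) (A n) ^ (1 / 2 : ℝ) := by
    filter_upwards [eventually_ge_atTop ⌈γ ^ 2⌉₊, eventually_gt_atTop 0] with n hγn hn
    have hn : (0 : ℝ) < n := by exact_mod_cast hn
    have hε1 : γ / Real.sqrt n ≤ 1 :=
      div_le_one_of_le₀ (Real.le_sqrt_of_sq_le (Nat.ceil_le.mp hγn)) (Real.sqrt_nonneg _)
    have hnε : n * (γ / Real.sqrt n) ^ 2 = γ ^ 2 := by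
      rw [div_pow, Real.sq_sqrt hn.le]
      field_simp
    have := pi_mixture_withDensity_apply_le μ hℓ hℓ1 hk (by positivity) hε1 n (A n)
    rwa [← mul_assoc, hnε] at this
  have hlim : Tendsto (fun n : ℕ => C * Measure.pi (fun _ : Fin n => μ) (A n) ^ (1 / 2 : ℝ))
      atTop (𝓝 0) := by
    have hsqrt : Tendsto (fun n : ℕ => Measure.pi (fun _ : Fin n => μ) (A n) ^ (1 / 2 : ℝ))
        atTop (𝓝 0) := by
      simpa [Function.comp_def] using
        ((ENNReal.continuous_rpow_const (y := 1 / 2)).tendsto 0).comp h₀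
    have hC : C ≠ ∞ := by simp [C]
    simpa using ENNReal.Tendsto.const_mul hsqrt (Or.inr hC)
  exact tendsto_of_tendsto_of_tendsto_of_le_of_le' tendsto_const_nhds hlim
    (Eventually.of_forall fun _ => zero_le) hbound

end Mixture

end MeasureTheory

theorem stmt_13_general {d : ℕ}
    (f₀ h : EuclideanSpace ℝ (Fin d) → ℝ)
    (hf₀c : Continuous f₀) (hhc : Continuous h)
    (hf₀pos : ∀ x, 0 < f₀ x)
    (F₀ H : Measure (EuclideanSpace ℝ (Fin d)))
    (hF₀ : F₀ = volume.withDensity fun x => ENNReal.ofReal (f₀ x))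
    (hH : H = volume.withDensity fun x => ENNReal.ofReal (h x))
    [IsProbabilityMeasure F₀] [IsProbabilityMeasure H]
    (hmom : Integrable (fun x => (h x / f₀ x - 1) ^ 4) F₀)
    (γ : ℝ) (hγ : 0 < γ)
    (A : (n : ℕ) → Set (Fin n → EuclideanSpace ℝ (Fin d)))
    (h₀ : Tendsto (fun n : ℕ => Measure.pi (fun _ : Fin n => F₀) (A n)) atTop (𝓝 0)) :
    Tendsto (fun n : ℕ =>
      Measure.pi (fun _ : Fin n =>
        ENNReal.ofReal (1 - γ / Real.sqrt (n : ℝ)) • F₀ +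
          ENNReal.ofReal (γ / Real.sqrt (n : ℝ)) • H) (A n))
      atTop (𝓝 0) := by
  set ℓ := fun x => ENNReal.ofReal (h x / f₀ x)
  have hℓ : Measurable ℓ := (hhc.measurable.div hf₀c.measurable).ennreal_ofReal
  have hHℓ : H = F₀.withDensity ℓ := by
    rw [hH, hF₀, withDensity_ofReal_div _ hf₀c.measurable hhc.measurable hf₀pos]
  have hℓ1 : ∫⁻ x, ℓ x ∂F₀ = 1 := by
    rw [← setLIntegral_univ, ← withDensity_apply _ .univ, ← hHℓ, measure_univ]
  rw [hHℓ]
  exact tendsto_pi_mixture_withDensity_apply_of_tendsto F₀ hℓ hℓ1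
    (lintegral_ofReal_sq_ne_top_of_integrable_pow_four F₀ hmom) hγ.le h₀

/-- Contiguity of the product laws of the mixture alternatives
`Fₙ = (1 − γ/√n) F₀ + (γ/√n) H` with respect to the product laws of `F₀`. -/
theorem stmt_13 {d : ℕ}
    (f₀ h : EuclideanSpace ℝ (Fin d) → ℝ)
    (hf₀c : Continuous f₀) (hhc : Continuous h)
    (hf₀pos : ∀ x, 0 < f₀ x) (hhpos : ∀ x, 0 < h x)
    (F₀ H : Measure (EuclideanSpace ℝ (Fin d)))
    (hF₀ : F₀ = volume.withDensity fun x => ENNReal.ofReal (f₀ x))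
    (hH : H = volume.withDensity fun x => ENNReal.ofReal (h x))
    [IsProbabilityMeasure F₀] [IsProbabilityMeasure H]
    (hmom : Integrable (fun x => (h x / f₀ x - 1) ^ 4) F₀)
    (γ : ℝ) (hγ : 0 < γ)
    (A : (n : ℕ) → Set (Fin n → EuclideanSpace ℝ (Fin d)))
    (hA : ∀ n, MeasurableSet (A n))
    (h₀ : Tendsto (fun n : ℕ => Measure.pi (fun _ : Fin n => F₀) (A n)) atTop (𝓝 0)) :
    Tendsto (fun n : ℕ =>
      Measure.pi (fun _ : Fin n =>
        ENNReal.ofReal (1 - γ / Real.sqrt (n : ℝ)) • F₀ +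
          ENNReal.ofReal (γ / Real.sqrt (n : ℝ)) • H) (A n))
      atTop (𝓝 0) :=
  stmt_13_general f₀ h hf₀c hhc hf₀pos F₀ H hF₀ hH hmom γ hγ A h₀
end

section
/- Let f and h be continuous, strictly positive probability densities on ℝ^d such that ∫ (h(x)/f(x) − 1)^4 f(x) dx < ∞, let F and H be the corresponding probability measures, and fix γ > 0. Let (n_k) and (m_k) be sequences of positive integers with min(n_k, m_k) → ∞ and n_k/(n_k+m_k) → λ for some λ ∈ (0,1), and for n_k + m_k > γ² define the mixture G_k = (1 − γ/√(n_k+m_k)) F + (γ/√(n_k+m_k)) H. Then the sequence of product measures (F^{⊗n_k} ⊗ G_k^{⊗m_k}) is contiguous with respect to (F^{⊗n_k} ⊗ F^{⊗m_k}): for every sequence of Borel sets A_k ⊆ (ℝ^d)^{n_k} × (ℝ^d)^{m_k} with (F^{⊗n_k} ⊗ F^{⊗m_k})(A_k) → 0, one also has (F^{⊗n_k} ⊗ G_k^{⊗m_k})(A_k) → 0. -/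
/-!
Write `r = h / f`, `ε_k = γ / √(n_k + m_k)` and `P_k = F^{⊗n_k} ⊗ F^{⊗m_k}`. The alternative
`Q_k` has density `ρ_k(x, y) = ∏ⱼ (1 - ε_k + ε_k r(y_j))` with respect to `P_k`, and by
Cauchy–Schwarz `Q_k(A) ≤ (∫ ρ_k² dP_k)^{1/2} P_k(A)^{1/2}`. So it suffices to bound the second
moments of `ρ_k` uniformly. They factor as
`(∫ (1 - ε_k + ε_k r)² dF)^{m_k} ≤ (1 + ε_k² ∫ r² dF)^{m_k}`, and since `ε_k² m_k ≤ γ²` this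
is at most `exp (γ² ∫ r² dF)`, which is finite by the moment assumption.
-/

open MeasureTheory ProbabilityTheory Filter Topology
open scoped ENNReal

section Pi

variable {ι : Type*} [Fintype ι] {α : ι → Type*} [∀ i, MeasurableSpace (α i)]
  {μ : (i : ι) → Measure (α i)} [∀ i, IsProbabilityMeasure (μ i)]

lemma lintegral_pi_prod_eq_prod {g : (i : ι) → α i → ℝ≥0∞} (hg : ∀ i, Measurable (g i)) :
    ∫⁻ x, ∏ i, g i (x i) ∂Measure.pi μ = ∏ i, ∫⁻ x, g i x ∂μ i := by
  rw [← Finset.prod_congr rfl fun i _ => (measurePreserving_eval μ i).lintegral_comp (hg i)]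
  exact lintegral_prod_eq_prod_lintegral_of_indepFun _ (fun i (x : ∀ i, α i) => g i (x i))
    (iIndepFun_pi fun i => (hg i).aemeasurable) fun i => (hg i).comp (measurable_pi_apply i)

lemma pi_withDensity {g : (i : ι) → α i → ℝ≥0∞} (hg : ∀ i, Measurable (g i))
    [∀ i, SigmaFinite ((μ i).withDensity (g i))] :
    Measure.pi (fun i => (μ i).withDensity (g i)) =
      (Measure.pi μ).withDensity fun x => ∏ i, g i (x i) := by
  refine Measure.pi_eq fun s hs => ?_
  have hbox : (Set.univ.pi s).indicator (fun x => ∏ i, g i (x i)) =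
      fun x => ∏ i, (s i).indicator (g i) (x i) := by
    ext x
    classical
    simp only [Set.indicator_apply, Set.mem_univ_pi, Finset.prod_ite_zero, Finset.mem_univ,
      true_implies]
  rw [withDensity_apply _ (.univ_pi hs), ← lintegral_indicator (.univ_pi hs), hbox,
    lintegral_pi_prod_eq_prod fun i => (hg i).indicator (hs i)]
  exact Finset.prod_congr rfl fun i _ => by
    rw [lintegral_indicator (hs i), withDensity_apply _ (hs i)]

end Pi

lemma withDensity_apply_le_sqrt {α : Type*} [MeasurableSpace α] {μ : Measure α}
    {ρ : α → ℝ≥0∞} (hρ : AEMeasurable ρ μ) {s : Set α} (hs : MeasurableSet s) :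
    μ.withDensity ρ s ≤ (∫⁻ x, ρ x ^ 2 ∂μ) ^ (1 / 2 : ℝ) * μ s ^ (1 / 2 : ℝ) := by
  have := ENNReal.lintegral_mul_le_Lp_mul_Lq (μ.restrict s) Real.HolderConjugate.two_two
    hρ.restrict aemeasurable_const (g := 1)
  simp only [Pi.mul_apply, Pi.one_apply, mul_one, ENNReal.rpow_two, one_pow, lintegral_one,
    Measure.restrict_apply_univ] at this
  rw [withDensity_apply _ hs]
  refine this.trans ?_
  gcongr
  exact Measure.restrict_le_self

theorem tendsto_withDensity_apply_nhds_zero {κ : Type*} {l : Filter κ} {X : κ → Type*}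
    [∀ k, MeasurableSpace (X k)] {μ : ∀ k, Measure (X k)} {ρ : ∀ k, X k → ℝ≥0∞}
    (hρ : ∀ k, AEMeasurable (ρ k) (μ k)) {B : ℝ≥0∞} (hB : B ≠ ∞)
    (hρB : ∀ᶠ k in l, ∫⁻ x, ρ k x ^ 2 ∂μ k ≤ B) {s : ∀ k, Set (X k)}
    (hs : ∀ k, MeasurableSet (s k)) (hμs : Tendsto (fun k => μ k (s k)) l (𝓝 0)) :
    Tendsto (fun k => (μ k).withDensity (ρ k) (s k)) l (𝓝 0) := by
  have hbound : Tendsto (fun k => B ^ (1 / 2 : ℝ) * μ k (s k) ^ (1 / 2 : ℝ)) l (𝓝 0) := by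
    have := ((ENNReal.continuous_rpow_const (y := 1 / 2)).tendsto 0).comp hμs
    simpa using ENNReal.Tendsto.const_mul this
      (.inr (ENNReal.rpow_ne_top_of_nonneg (by norm_num) hB))
  refine tendsto_of_tendsto_of_tendsto_of_le_of_le' tendsto_const_nhds hbound
    (.of_forall fun _ => zero_le) ?_
  filter_upwards [hρB] with k hk
  refine (withDensity_apply_le_sqrt (hρ k) (hs k)).trans ?_
  gcongr

lemma withDensity_ofReal_eq_withDensity_ofReal_div {α : Type*} [MeasurableSpace α]
    {μ : Measure α} {f g : α → ℝ} (hf : Measurable f) (hg : Measurable g)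
    (hf_pos : ∀ x, 0 < f x) :
    μ.withDensity (fun x => ENNReal.ofReal (g x)) =
      (μ.withDensity fun x => ENNReal.ofReal (f x)).withDensity
        fun x => ENNReal.ofReal (g x / f x) := by
  rw [← withDensity_mul _ hf.ennreal_ofReal
    (by fun_prop : Measurable fun x => ENNReal.ofReal (g x / f x))]
  congr with x
  rw [Pi.mul_apply, ← ENNReal.ofReal_mul (hf_pos x).le, mul_div_cancel₀ _ (hf_pos x).ne']

lemma sq_ofReal_le_ofReal_sq (t : ℝ) : ENNReal.ofReal t ^ 2 ≤ ENNReal.ofReal (t ^ 2) := by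
  rcases le_total 0 t with ht | ht
  · exact (ENNReal.ofReal_pow ht 2).ge
  · simp [ENNReal.ofReal_of_nonpos ht]

lemma lintegral_ofReal_sq_ne_top {α : Type*} [MeasurableSpace α] {μ : Measure α}
    [IsFiniteMeasure μ] {φ : α → ℝ} (hφ : Integrable (fun x => (φ x - 1) ^ 4) μ) :
    ∫⁻ x, ENNReal.ofReal (φ x) ^ 2 ∂μ ≠ ∞ := by
  refine ne_top_of_le_ne_top ((integrable_const 3).add hφ).lintegral_lt_top.ne
    (lintegral_mono fun x => (sq_ofReal_le_ofReal_sq _).trans (ENNReal.ofReal_le_ofReal ?_))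
  simp only [Pi.add_apply]
  -- 3 + (t - 1)⁴ - t² = ((t - 1)² - 1)² + (t - 2)²
  nlinarith [sq_nonneg ((φ x - 1) ^ 2 - 1), sq_nonneg (φ x - 2)]

section Mixture

variable {α : Type*} [MeasurableSpace α] {μ : Measure α} {r : α → ℝ≥0∞}

lemma smul_add_smul_withDensity (hr : Measurable r) (a b : ℝ≥0∞) :
    a • μ + b • μ.withDensity r = μ.withDensity fun x => a + b * r x := by
  rw [← withDensity_const, ← withDensity_smul _ hr, ← withDensity_add_right _ (hr.const_smul b)]
  rfl

lemma lintegral_add_mul_sq_le [IsProbabilityMeasure μ] (hr : Measurable r)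
    (hr1 : ∫⁻ x, r x ∂μ = 1) {a b : ℝ≥0∞} (hab : a + b = 1) :
    ∫⁻ x, (a + b * r x) ^ 2 ∂μ ≤ 1 + b ^ 2 * ∫⁻ x, r x ^ 2 ∂μ := by
  have hexpand : ∀ x, (a + b * r x) ^ 2 = a ^ 2 + (2 * a * b * r x + b ^ 2 * r x ^ 2) :=
    fun x => by ring
  simp_rw [hexpand]
  rw [lintegral_add_left measurable_const, lintegral_const, measure_univ, mul_one,
    lintegral_add_left (hr.const_mul _), lintegral_const_mul _ hr,
    lintegral_const_mul _ (hr.pow_const 2), hr1, mul_one, ← add_assoc]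
  have hsq : a ^ 2 + 2 * a * b ≤ 1 :=
    calc a ^ 2 + 2 * a * b ≤ (a + b) ^ 2 := by rw [add_sq]; exact le_self_add
      _ = 1 := by rw [hab, one_pow]
  gcongr

variable [IsProbabilityMeasure μ] {ι κ : Type*} [Fintype ι] [Fintype κ]

lemma prod_pi_mixture_eq_withDensity (hr : Measurable r) (hr_fin : ∫⁻ x, r x ∂μ ≠ ∞)
    {a b : ℝ≥0∞} (hab : a + b = 1) :
    (Measure.pi fun _ : ι => μ).prod (Measure.pi fun _ : κ => a • μ + b • μ.withDensity r) =
      ((Measure.pi fun _ : ι => μ).prod (Measure.pi fun _ : κ => μ)).withDensity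
        fun z => ∏ j, (a + b * r (z.2 j)) := by
  have hg : Measurable fun x => a + b * r x := (hr.const_mul b).const_add a
  have : IsFiniteMeasure (μ.withDensity fun x => a + b * r x) := by
    refine isFiniteMeasure_withDensity ?_
    rw [lintegral_add_left measurable_const, lintegral_const, measure_univ, mul_one,
      lintegral_const_mul _ hr]
    have ha : a ≠ ∞ := ne_top_of_le_ne_top ENNReal.one_ne_top (hab ▸ le_self_add)
    have hb : b ≠ ∞ := ne_top_of_le_ne_top ENNReal.one_ne_top (hab ▸ le_add_self)
    finiteness
  rw [smul_add_smul_withDensity hr, pi_withDensity fun _ => hg,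
    prod_withDensity_right (by fun_prop)]

lemma lintegral_prod_pi_sq {g : α → ℝ≥0∞} (hg : Measurable g) :
    ∫⁻ z, (∏ j, g (z.2 j)) ^ 2 ∂(Measure.pi fun _ : ι => μ).prod (Measure.pi fun _ : κ => μ) =
      (∫⁻ x, g x ^ 2 ∂μ) ^ Fintype.card κ := by
  have hprod : Measurable fun y : κ → α => (∏ j, g (y j)) ^ 2 := by fun_prop
  rw [← lintegral_map hprod measurable_snd, ← Measure.snd, Measure.snd_prod]
  simp_rw [← Finset.prod_pow]
  rw [lintegral_pi_prod_eq_prod fun _ => hg.pow_const 2, Finset.prod_const, Finset.card_univ]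

end Mixture

lemma ofReal_one_sub_add_ofReal {ε : ℝ} (h0 : 0 ≤ ε) (h1 : ε ≤ 1) :
    ENNReal.ofReal (1 - ε) + ENNReal.ofReal ε = 1 := by
  rw [← ENNReal.ofReal_add (by linarith) h0, sub_add_cancel, ENNReal.ofReal_one]

lemma one_add_div_pow_le_exp {x N : ℝ} (hx : 0 ≤ x) (hN : 0 < N) {m : ℕ} (hm : (m : ℝ) ≤ N) :
    (1 + x / N) ^ m ≤ Real.exp x :=
  calc (1 + x / N) ^ m ≤ Real.exp (x / N) ^ m := by
        gcongr
        linarith [Real.add_one_le_exp (x / N)]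
    _ = Real.exp (m * (x / N)) := (Real.exp_nat_mul _ _).symm
    _ ≤ Real.exp x := by
        gcongr
        rw [mul_div_assoc', div_le_iff₀ hN]
        nlinarith

lemma one_add_ofReal_div_sqrt_sq_mul_pow_le {γ N : ℝ} (hγ : 0 ≤ γ) (hN : 0 < N) {m : ℕ}
    (hm : (m : ℝ) ≤ N) {C : ℝ≥0∞} (hC : C ≠ ∞) :
    (1 + ENNReal.ofReal (γ / Real.sqrt N) ^ 2 * C) ^ m ≤
      ENNReal.ofReal (Real.exp (γ ^ 2 * C.toReal)) := by
  have hc := ENNReal.toReal_nonneg (a := C)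
  rw [← ENNReal.ofReal_pow (by positivity), div_pow, Real.sq_sqrt hN.le,
    ← ENNReal.ofReal_toReal hC, ← ENNReal.ofReal_mul (by positivity), ← ENNReal.ofReal_one,
    ← ENNReal.ofReal_add zero_le_one (by positivity), ← ENNReal.ofReal_pow (by positivity),
    ENNReal.toReal_ofReal hc, div_mul_eq_mul_div]
  exact ENNReal.ofReal_le_ofReal (one_add_div_pow_le_exp (by positivity) hN hm)

theorem stmt_15_general {d : ℕ}
    (f h : EuclideanSpace ℝ (Fin d) → ℝ)
    (hfc : Continuous f) (hhc : Continuous h)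
    (hfpos : ∀ x, 0 < f x)
    (F H : Measure (EuclideanSpace ℝ (Fin d)))
    (hF : F = volume.withDensity fun x => ENNReal.ofReal (f x))
    (hH : H = volume.withDensity fun x => ENNReal.ofReal (h x))
    [IsProbabilityMeasure F] [IsProbabilityMeasure H]
    (hmom : Integrable (fun x => (h x / f x - 1) ^ 4) F)
    (γ : ℝ) (hγ : 0 < γ)
    (n m : ℕ → ℕ)
    (hmin : Tendsto (fun k => min (n k) (m k)) atTop atTop)
    (A : (k : ℕ) → Set ((Fin (n k) → EuclideanSpace ℝ (Fin d)) ×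
      (Fin (m k) → EuclideanSpace ℝ (Fin d))))
    (hA : ∀ k, MeasurableSet (A k))
    (h₀ : Tendsto (fun k =>
      ((Measure.pi fun _ : Fin (n k) => F).prod (Measure.pi fun _ : Fin (m k) => F)) (A k))
      atTop (𝓝 0)) :
    Tendsto (fun k =>
      ((Measure.pi fun _ : Fin (n k) => F).prod
        (Measure.pi fun _ : Fin (m k) =>
          ENNReal.ofReal (1 - γ / Real.sqrt ((n k : ℝ) + (m k : ℝ))) • F +
            ENNReal.ofReal (γ / Real.sqrt ((n k : ℝ) + (m k : ℝ))) • H)) (A k))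
      atTop (𝓝 0) := by
  set r : EuclideanSpace ℝ (Fin d) → ℝ≥0∞ := fun x => ENNReal.ofReal (h x / f x)
  have hr : Measurable r := by fun_prop
  have hHF : H = F.withDensity r := by
    rw [hH, hF, withDensity_ofReal_eq_withDensity_ofReal_div hfc.measurable hhc.measurable hfpos]
  have hr1 : ∫⁻ x, r x ∂F = 1 := by simpa [hHF] using measure_univ (μ := H)
  have hr2 : ∫⁻ x, r x ^ 2 ∂F ≠ ∞ := lintegral_ofReal_sq_ne_top (by simpa using hmom)
  set N : ℕ → ℝ := fun k => n k + m k
  set ε : ℕ → ℝ := fun k => γ / Real.sqrt (N k)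
  have hN : ∀ᶠ k in atTop, γ ^ 2 ≤ N k := by
    filter_upwards [(tendsto_natCast_atTop_atTop.comp hmin).eventually_ge_atTop (γ ^ 2)]
      with k hk
    refine hk.trans ?_
    simp only [Function.comp_apply, N]
    exact_mod_cast (min_le_left _ _).trans (Nat.le_add_right _ _)
  have hweights : ∀ k, γ ^ 2 ≤ N k → ENNReal.ofReal (1 - ε k) + ENNReal.ofReal (ε k) = 1 :=
    fun k hk => ofReal_one_sub_add_ofReal (by positivity)
      (div_le_one_of_le₀ (Real.le_sqrt_of_sq_le hk) (Real.sqrt_nonneg _))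
  refine (tendsto_withDensity_apply_nhds_zero
    (ρ := fun k z => ∏ j, (ENNReal.ofReal (1 - ε k) + ENNReal.ofReal (ε k) * r (z.2 j)))
    (fun k => by fun_prop) (B := ENNReal.ofReal (Real.exp (γ ^ 2 * (∫⁻ x, r x ^ 2 ∂F).toReal)))
    ENNReal.ofReal_ne_top ?_ hA h₀).congr' ?_
  · filter_upwards [hN] with k hk
    rw [lintegral_prod_pi_sq ((hr.const_mul _).const_add _), Fintype.card_fin]
    calc _ ≤ (1 + ENNReal.ofReal (ε k) ^ 2 * ∫⁻ x, r x ^ 2 ∂F) ^ m k := by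
          gcongr
          exact lintegral_add_mul_sq_le hr hr1 (hweights k hk)
      _ ≤ _ := one_add_ofReal_div_sqrt_sq_mul_pow_le hγ.le ((pow_pos hγ 2).trans_le hk)
            (by simp [N]) hr2
  · filter_upwards [hN] with k hk
    rw [hHF, prod_pi_mixture_eq_withDensity hr (hr1 ▸ ENNReal.one_ne_top) (hweights k hk)]

/-- Two-sample contiguity: the product laws `F^{⊗n_k} ⊗ G_k^{⊗m_k}` of the mixture
alternatives `G_k = (1 − γ/√(n_k+m_k)) F + (γ/√(n_k+m_k)) H` are contiguous with respect
to the null product laws `F^{⊗n_k} ⊗ F^{⊗m_k}`. -/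
theorem stmt_15 {d : ℕ}
    (f h : EuclideanSpace ℝ (Fin d) → ℝ)
    (hfc : Continuous f) (hhc : Continuous h)
    (hfpos : ∀ x, 0 < f x) (hhpos : ∀ x, 0 < h x)
    (F H : Measure (EuclideanSpace ℝ (Fin d)))
    (hF : F = volume.withDensity fun x => ENNReal.ofReal (f x))
    (hH : H = volume.withDensity fun x => ENNReal.ofReal (h x))
    [IsProbabilityMeasure F] [IsProbabilityMeasure H]
    (hmom : Integrable (fun x => (h x / f x - 1) ^ 4) F)
    (γ : ℝ) (hγ : 0 < γ)
    (n m : ℕ → ℕ)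
    (hmin : Tendsto (fun k => min (n k) (m k)) atTop atTop)
    (lam : ℝ) (hlam : lam ∈ Set.Ioo (0 : ℝ) 1)
    (hratio : Tendsto (fun k => (n k : ℝ) / ((n k : ℝ) + (m k : ℝ))) atTop (𝓝 lam))
    (A : (k : ℕ) → Set ((Fin (n k) → EuclideanSpace ℝ (Fin d)) ×
      (Fin (m k) → EuclideanSpace ℝ (Fin d))))
    (hA : ∀ k, MeasurableSet (A k))
    (h₀ : Tendsto (fun k =>
      ((Measure.pi fun _ : Fin (n k) => F).prod (Measure.pi fun _ : Fin (m k) => F)) (A k))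
      atTop (𝓝 0)) :
    Tendsto (fun k =>
      ((Measure.pi fun _ : Fin (n k) => F).prod
        (Measure.pi fun _ : Fin (m k) =>
          ENNReal.ofReal (1 - γ / Real.sqrt ((n k : ℝ) + (m k : ℝ))) • F +
            ENNReal.ofReal (γ / Real.sqrt ((n k : ℝ) + (m k : ℝ))) • H)) (A k))
      atTop (𝓝 0) :=
  stmt_15_general f h hfc hhc hfpos F H hF hH hmom γ hγ n m hmin A hA h₀
end

section
/- Let μ be a Borel probability measure on ℝ^d such that μ(∂H) = 0 for every closed half-space H of ℝ^d (equivalently, μ assigns zero mass to every affine hyperplane). Then the map (x, u) ↦ μ{ y ∈ ℝ^d : ⟨u, y⟩ ≤ ⟨u, x⟩ } is continuous on ℝ^d × S^{d-1}, and the half-space depth function x ↦ D_μ(x) is continuous on ℝ^d. -/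
open MeasureTheory Filter Topology
open scoped RealInnerProductSpace

theorem frontier_setOf_inner_le {E : Type*} [NormedAddCommGroup E] [InnerProductSpace ℝ E]
    [CompleteSpace E] {u : E} (hu : u ≠ 0) (c : ℝ) :
    frontier {y : E | ⟪u, y⟫ ≤ c} = {y | ⟪u, y⟫ = c} := by
  have hsurj : Function.Surjective (innerSL ℝ u) := fun t =>
    ⟨(t / ‖u‖ ^ 2) • u, by
      rw [innerSL_apply_apply, real_inner_smul_right, real_inner_self_eq_norm_sq,
        div_mul_cancel₀ _ (pow_ne_zero 2 (norm_ne_zero_iff.2 hu))]⟩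
  simpa [Set.preimage, frontier_Iic] using (innerSL ℝ u).frontier_preimage hsurj (Set.Iic c)

theorem Filter.Tendsto.eventually_le_iff_of_ne {γ α : Type*} [LinearOrder α] [TopologicalSpace α]
    [OrderClosedTopology α] {l : Filter γ} {f g : γ → α} {a b : α}
    (hf : Tendsto f l (𝓝 a)) (hg : Tendsto g l (𝓝 b)) (hab : a ≠ b) :
    ∀ᶠ x in l, (f x ≤ g x ↔ a ≤ b) := by
  rcases hab.lt_or_gt with h | h
  · filter_upwards [hf.eventually_lt hg h] with x hx
    exact iff_of_true hx.le h.le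
  · filter_upwards [hg.eventually_lt hf h] with x hx
    exact iff_of_false hx.not_ge h.not_ge

theorem tendsto_measure_setOf_le_of_measure_setOf_eq {ι Ω α : Type*} [MeasurableSpace Ω]
    [LinearOrder α] [TopologicalSpace α] [OrderClosedTopology α]
    (μ : Measure Ω) [IsFiniteMeasure μ] {l : Filter ι} [l.IsCountablyGenerated]
    {f g : ι → Ω → α} {f₀ g₀ : Ω → α}
    (hf : ∀ ω, Tendsto (f · ω) l (𝓝 (f₀ ω))) (hg : ∀ ω, Tendsto (g · ω) l (𝓝 (g₀ ω)))
    (hmeas : ∀ i, MeasurableSet {ω | f i ω ≤ g i ω}) (hmeas₀ : MeasurableSet {ω | f₀ ω ≤ g₀ ω})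
    (hnull : μ {ω | f₀ ω = g₀ ω} = 0) :
    Tendsto (fun i => μ {ω | f i ω ≤ g i ω}) l (𝓝 (μ {ω | f₀ ω ≤ g₀ ω})) := by
  refine tendsto_measure_of_ae_tendsto_indicator_of_isFiniteMeasure _ hmeas₀ hmeas ?_
  filter_upwards [measure_eq_zero_iff_ae_notMem.1 hnull] with ω hω
  exact (hf ω).eventually_le_iff_of_ne (hg ω) hω

theorem continuous_iInf_of_compactSpace {α β γ : Type*} [ConditionallyCompleteLinearOrder α]
    [TopologicalSpace α] [OrderTopology α] [TopologicalSpace β] [CompactSpace β]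
    [TopologicalSpace γ] {f : γ → β → α} (hf : Continuous ↿f) :
    Continuous fun x => ⨅ y, f x y := by
  simpa only [Set.image_univ, sInf_range] using isCompact_univ.continuous_sInf hf

theorem continuous_measure_setOf_inner_le {E : Type*} [NormedAddCommGroup E]
    [InnerProductSpace ℝ E] [MeasurableSpace E] [OpensMeasurableSpace E]
    (μ : Measure E) [IsFiniteMeasure μ]
    (hnull : ∀ u : E, ‖u‖ = 1 → ∀ c : ℝ, μ {y | ⟪u, y⟫ = c} = 0) :
    Continuous fun p : E × Metric.sphere (0 : E) 1 =>
      (μ {y | ⟪(p.2 : E), y⟫ ≤ ⟪(p.2 : E), p.1⟫}).toReal := by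
  refine continuous_iff_continuousAt.2 fun p => ?_
  refine (ENNReal.tendsto_toReal (measure_ne_top μ _)).comp
    (tendsto_measure_setOf_le_of_measure_setOf_eq μ (fun y => ?_) (fun y => ?_)
      (fun q => measurableSet_le (by fun_prop) (by fun_prop))
      (measurableSet_le (by fun_prop) (by fun_prop))
      (hnull _ (mem_sphere_zero_iff_norm.1 p.2.2) _))
  all_goals exact Continuous.tendsto (by fun_prop) p

/-- If `μ` puts no mass on the boundary of any closed half-space, then
`(x, u) ↦ μ{ y : ⟨u, y⟩ ≤ ⟨u, x⟩ }` is continuous on `ℝ^d × S^{d-1}` and the half-space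
depth function `x ↦ D_μ(x)` is continuous. -/
theorem stmt_18 {d : ℕ}
    (μ : Measure (EuclideanSpace ℝ (Fin d))) [IsProbabilityMeasure μ]
    (hbd : ∀ u : EuclideanSpace ℝ (Fin d), ‖u‖ = 1 → ∀ c : ℝ,
      μ (frontier {y | ⟪u, y⟫ ≤ c}) = 0) :
    Continuous (fun p : EuclideanSpace ℝ (Fin d) ×
        Metric.sphere (0 : EuclideanSpace ℝ (Fin d)) 1 =>
      (μ {y | ⟪(p.2 : EuclideanSpace ℝ (Fin d)), y⟫ ≤
          ⟪(p.2 : EuclideanSpace ℝ (Fin d)), p.1⟫}).toReal) ∧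
    Continuous (fun x => halfSpaceDepth μ x) := by
  have hnull : ∀ u : EuclideanSpace ℝ (Fin d), ‖u‖ = 1 → ∀ c : ℝ, μ {y | ⟪u, y⟫ = c} = 0 :=
    fun u hu c => by
      rw [← frontier_setOf_inner_le (norm_ne_zero_iff.1 (hu.trans_ne one_ne_zero))]
      exact hbd u hu c
  have hcont := continuous_measure_setOf_inner_le μ hnull
  exact ⟨hcont, continuous_iInf_of_compactSpace hcont⟩
end
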